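/- arXiv:2505.21337 — 8 statements merged into one kernel-verified Lean document; each statement's English description precedes it below -/
import Mathlib

section
/- Let K : H_μ → H be a bounded linear operator. Then K is causal (i.e., K⁻¹(U) ∈ 𝓗_{μ,t} for every t ∈ [0,T] and every U ∈ 𝓗_t) if and only if for every t ∈ [0,T], K maps the orthogonal complement of H_{μ,t} in H_μ into the orthogonal complement of H_t in H. -/
open MeasureTheory

/-- The closed subspace `H_{μ,t}` of `L²(μ)`: functions vanishing `μ`-a.e. on `(t, T]`. -/
def timeSubspace (T : ℝ) (μ : Measure ℝ) (t : ℝ) : Set (Lp ℝ 2 μ) :=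
  {f | ∀ᵐ s ∂μ, s ∈ Set.Ioc t T → f s = 0}

/-- The smallest σ-algebra on `E` for which every map `x ↦ ⟪v, x⟫` with `v ∈ V`
is measurable. -/
def innerSigma {E : Type*} [NormedAddCommGroup E] [InnerProductSpace ℝ E] (V : Set E) :
    MeasurableSpace E :=
  ⨆ v ∈ V, MeasurableSpace.comap (fun x : E => (inner ℝ v x : ℝ)) inferInstance

/-- A bounded linear operator `K : H_μ → H` is causal if `K⁻¹(U) ∈ 𝓗_{μ,t}` for all
`t ∈ [0,T]` and all `U ∈ 𝓗_t`. -/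
def IsCausal (T : ℝ) (μ ν : Measure ℝ) (K : Lp ℝ 2 μ →L[ℝ] Lp ℝ 2 ν) : Prop :=
  ∀ t ∈ Set.Icc (0:ℝ) T, ∀ U : Set (Lp ℝ 2 ν),
    MeasurableSet[innerSigma (timeSubspace T ν t)] U →
    MeasurableSet[innerSigma (timeSubspace T μ t)] (K ⁻¹' U)

section Aux

variable {E : Type*} [NormedAddCommGroup E] [InnerProductSpace ℝ E]

/-- Sets in `innerSigma V` are invariant under translation by vectors orthogonal to `V`. -/
lemma innerSigma_translation (V : Set E) (f : E) (hf : ∀ v ∈ V, (inner ℝ v f : ℝ) = 0)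
    {U : Set E} (hU : MeasurableSet[innerSigma V] U) :
    ∀ x, x ∈ U ↔ x + f ∈ U := by
  let m : MeasurableSpace E :=
    { MeasurableSet' := fun U => (fun x => x + f) ⁻¹' U = U
      measurableSet_empty := rfl
      measurableSet_compl := fun s hs => by
        show (fun x => x + f) ⁻¹' sᶜ = sᶜ
        rw [Set.preimage_compl, hs]
      measurableSet_iUnion := fun s hs => by
        show (fun x => x + f) ⁻¹' (⋃ i, s i) = ⋃ i, s i
        rw [Set.preimage_iUnion]
        exact Set.iUnion_congr hs }
  have hle : innerSigma V ≤ m := by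
    apply iSup₂_le
    intro v hv s hs
    obtain ⟨B, _hB, rfl⟩ := hs
    show (fun x => x + f) ⁻¹' ((fun x : E => (inner ℝ v x : ℝ)) ⁻¹' B) = _
    ext x
    simp [inner_add_right, hf v hv]
  have h := hle U hU
  intro x
  exact (Set.ext_iff.mp h x).symm

lemma measurable_inner_of_mem_span (V : Set E) {w : E} (hw : w ∈ Submodule.span ℝ V) :
    Measurable[innerSigma V] (fun x => (inner ℝ w x : ℝ)) := by
  induction hw using Submodule.span_induction with
  | mem v hv =>
      refine measurable_iff_comap_le.mpr ?_
      exact le_iSup₂ (f := fun v (_ : v ∈ V) =>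
        MeasurableSpace.comap (fun x : E => (inner ℝ v x : ℝ)) inferInstance) v hv
  | zero =>
      have : (fun x : E => (inner ℝ (0:E) x : ℝ)) = fun _ => (0:ℝ) := by ext x; simp
      rw [this]; exact @measurable_const _ _ _ (innerSigma V) _
  | add a b _ _ ha hb =>
      have : (fun x => (inner ℝ (a + b) x : ℝ)) =
          fun x => (inner ℝ a x : ℝ) + (inner ℝ b x : ℝ) := by
        ext x; exact inner_add_left a b x
      rw [this]; exact Measurable.add ha hb
  | smul c a _ ha =>
      have : (fun x => (inner ℝ (c • a) x : ℝ)) = fun x => c * (inner ℝ a x : ℝ) := by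
        ext x; rw [real_inner_smul_left]
      rw [this]; exact Measurable.const_mul ha c

lemma measurable_inner_of_mem_closure (V : Set E) {w : E}
    (hw : w ∈ closure ((Submodule.span ℝ V : Submodule ℝ E) : Set E)) :
    Measurable[innerSigma V] (fun x => (inner ℝ w x : ℝ)) := by
  obtain ⟨u, hu, hlim⟩ := mem_closure_iff_seq_limit.mp hw
  letI : MeasurableSpace E := innerSigma V
  refine measurable_of_tendsto_metrizable (f := fun n x => (inner ℝ (u n) x : ℝ))
    (fun n => measurable_inner_of_mem_span V (hu n)) ?_
  rw [tendsto_pi_nhds]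
  intro x
  exact Filter.Tendsto.inner hlim tendsto_const_nhds

end Aux

theorem stmt_0 (T : ℝ) (hT : 0 < T) (μ : Measure ℝ) [IsFiniteMeasure μ]
    (hμ : μ (Set.Icc 0 T)ᶜ = 0)
    (K : Lp ℝ 2 μ →L[ℝ] Lp ℝ 2 (volume.restrict (Set.Icc (0:ℝ) T))) :
    IsCausal T μ (volume.restrict (Set.Icc (0:ℝ) T)) K ↔
      ∀ t ∈ Set.Icc (0:ℝ) T, ∀ f : Lp ℝ 2 μ,
        (∀ g ∈ timeSubspace T μ t, (inner ℝ f g : ℝ) = 0) →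
        ∀ g ∈ timeSubspace T (volume.restrict (Set.Icc (0:ℝ) T)) t,
          (inner ℝ (K f) g : ℝ) = 0 := by
  let ν := volume.restrict (Set.Icc (0:ℝ) T)
  constructor
  · -- causal → orthogonality preservation
    intro hK t ht f hf g hg
    set U : Set (Lp ℝ 2 ν) := (fun y => (inner ℝ g y : ℝ)) ⁻¹' {0} with hU
    have hUmeas : MeasurableSet[innerSigma (timeSubspace T ν t)] U := by
      have : Measurable[innerSigma (timeSubspace T ν t)] (fun y => (inner ℝ g y : ℝ)) :=
        measurable_inner_of_mem_span _ (Submodule.subset_span hg)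
      exact this (measurableSet_singleton 0)
    have hpre := hK t ht U hUmeas
    have hf' : ∀ v ∈ timeSubspace T μ t, (inner ℝ v f : ℝ) = 0 := by
      intro v hv; rw [real_inner_comm]; exact hf v hv
    have htrans := innerSigma_translation (timeSubspace T μ t) f hf' hpre 0
    have h0 : (0 : Lp ℝ 2 μ) ∈ K ⁻¹' U := by
      simp [hU, Set.mem_preimage]
    have hfU : f ∈ K ⁻¹' U := by
      have := htrans.mp h0
      simpa using this
    have : (inner ℝ g (K f) : ℝ) = 0 := hfU
    rw [real_inner_comm]; exact this
  · -- orthogonality preservation → causal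
    intro h t ht U hUmeas
    -- show K is measurable between the two σ-algebras
    have hKmeas : @Measurable _ _ (innerSigma (timeSubspace T μ t))
        (innerSigma (timeSubspace T ν t)) K := by
      rw [measurable_iff_comap_le]
      unfold innerSigma
      rw [MeasurableSpace.comap_iSup]
      apply iSup_le
      intro g
      rw [MeasurableSpace.comap_iSup]
      apply iSup_le
      intro hg
      rw [MeasurableSpace.comap_comp]
      rw [← measurable_iff_comap_le]
      -- need: fun x => ⟪g, K x⟫ is innerSigma (timeSubspace T μ t)-measurable
      set a := (ContinuousLinearMap.adjoint K) g with ha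
      have heq : (fun x : Lp ℝ 2 μ => (inner ℝ g (K x) : ℝ)) =
          fun x => (inner ℝ a x : ℝ) := by
        ext x
        rw [ha, ContinuousLinearMap.adjoint_inner_left]
      show Measurable[innerSigma (timeSubspace T μ t)]
        ((fun y : Lp ℝ 2 ν => (inner ℝ g y : ℝ)) ∘ K)
      have : ((fun y : Lp ℝ 2 ν => (inner ℝ g y : ℝ)) ∘ K) =
          fun x => (inner ℝ a x : ℝ) := heq
      rw [this]
      -- show a ∈ closure (span (timeSubspace T μ t))
      set S := (Submodule.span ℝ (timeSubspace T μ t)).topologicalClosure with hS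
      haveI : CompleteSpace S :=
        (Submodule.isClosed_topologicalClosure
          (Submodule.span ℝ (timeSubspace T μ t))).completeSpace_coe
      have haS : a ∈ S := by
        rw [← Submodule.orthogonal_orthogonal S]
        rw [Submodule.mem_orthogonal]
        intro q hq
        -- q ⊥ timeSubspace T μ t
        have hq' : ∀ v ∈ timeSubspace T μ t, (inner ℝ q v : ℝ) = 0 := by
          intro v hv
          rw [real_inner_comm]
          exact hq v (Submodule.le_topologicalClosure _ (Submodule.subset_span hv))
        have hKq := h t ht q hq' g hg
        -- ⟪q, a⟫ = ⟪K q, g⟫ = 0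
        rw [real_inner_comm, ha, ContinuousLinearMap.adjoint_inner_left,
          real_inner_comm]
        exact hKq
      have : a ∈ closure ((Submodule.span ℝ (timeSubspace T μ t) : Submodule ℝ _) :
          Set (Lp ℝ 2 μ)) := by
        rw [← Submodule.topologicalClosure_coe]
        exact haS
      exact measurable_inner_of_mem_closure _ this
    exact hKmeas hUmeas
end

section
/- Let K : H_μ → H be a bounded causal linear operator and set Σ = K ∘ K*, where K* denotes the Hilbert-space adjoint. Let U : H_μ → H_μ be a bounded linear operator such that U ∘ U* = id_{H_μ} and such that U maps the orthogonal complement of H_{μ,t} into itself for every t ∈ [0,T]. Then the composition K ∘ U is causal and satisfies (K ∘ U) ∘ (K ∘ U)* = Σ. -/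
open MeasureTheory

/-- `timeSubspace` as a submodule. -/
noncomputable def timeSubmodule (T : ℝ) (μ : Measure ℝ) (t : ℝ) : Submodule ℝ (Lp ℝ 2 μ) where
  carrier := timeSubspace T μ t
  zero_mem' := by
    filter_upwards [Lp.coeFn_zero ℝ 2 μ] with s hs _
    simpa using hs
  add_mem' := by
    intro f g hf hg
    filter_upwards [hf, hg, Lp.coeFn_add f g] with s hf' hg' hadd hs
    rw [hadd]
    simp [hf' hs, hg' hs]
  smul_mem' := by
    intro c f hf
    filter_upwards [hf, Lp.coeFn_smul c f] with s hf' hsmul hs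
    rw [hsmul]
    simp [hf' hs]

lemma inner_measurable_innerSigma {E : Type*} [NormedAddCommGroup E] [InnerProductSpace ℝ E]
    {V : Set E} {v : E} (hv : v ∈ V) :
    Measurable[innerSigma V] (fun x => (inner ℝ v x : ℝ)) :=
  Measurable.of_comap_le (le_iSup₂ (f := fun v _ =>
    MeasurableSpace.comap (fun x : E => (inner ℝ v x : ℝ)) inferInstance) v hv)

lemma inner_measurable_closure {E : Type*} [NormedAddCommGroup E] [InnerProductSpace ℝ E]
    {m : MeasurableSpace E} (W : Submodule ℝ E) {h : E} (hh : h ∈ W.topologicalClosure)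
    (hgen : ∀ v ∈ (W : Set E), Measurable[m] (fun x => (inner ℝ v x : ℝ))) :
    Measurable[m] (fun x => (inner ℝ h x : ℝ)) := by
  have hh' : h ∈ closure (W : Set E) := hh
  obtain ⟨u, hu, hlim⟩ := mem_closure_iff_seq_limit.mp hh'
  refine measurable_of_tendsto_metrizable (fun n => hgen (u n) (hu n)) ?_
  rw [tendsto_pi_nhds]
  intro x
  exact Filter.Tendsto.inner hlim tendsto_const_nhds

theorem stmt_2 (T : ℝ) (hT : 0 < T) (μ : Measure ℝ) [IsFiniteMeasure μ]
    (hμ : μ (Set.Icc 0 T)ᶜ = 0)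
    (K : Lp ℝ 2 μ →L[ℝ] Lp ℝ 2 (volume.restrict (Set.Icc (0:ℝ) T)))
    (hK : IsCausal T μ (volume.restrict (Set.Icc (0:ℝ) T)) K)
    (U : Lp ℝ 2 μ →L[ℝ] Lp ℝ 2 μ)
    (hUU : U.comp (ContinuousLinearMap.adjoint U) = ContinuousLinearMap.id ℝ (Lp ℝ 2 μ))
    (hUinv : ∀ t ∈ Set.Icc (0:ℝ) T, ∀ f : Lp ℝ 2 μ,
      (∀ g ∈ timeSubspace T μ t, (inner ℝ f g : ℝ) = 0) →
      ∀ g ∈ timeSubspace T μ t, (inner ℝ (U f) g : ℝ) = 0) :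
    IsCausal T μ (volume.restrict (Set.Icc (0:ℝ) T)) (K.comp U) ∧
      (K.comp U).comp (ContinuousLinearMap.adjoint (K.comp U)) =
        K.comp (ContinuousLinearMap.adjoint K) := by
  constructor
  · intro t ht S hS
    set W := timeSubmodule T μ t with hW
    have hWV : (W : Set (Lp ℝ 2 μ)) = timeSubspace T μ t := rfl
    -- U* maps timeSubspace into the closure of W
    have hadj : ∀ v ∈ timeSubspace T μ t,
        (ContinuousLinearMap.adjoint U) v ∈ W.topologicalClosure := by
      intro v hv
      rw [← Submodule.orthogonal_orthogonal_eq_closure]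
      rw [Submodule.mem_orthogonal]
      intro w hw
      have hw' : ∀ g ∈ timeSubspace T μ t, (inner ℝ w g : ℝ) = 0 := by
        intro g hg
        rw [real_inner_comm]
        exact (Submodule.mem_orthogonal W w).mp hw g hg
      have := hUinv t ht w hw' v hv
      calc (inner ℝ w ((ContinuousLinearMap.adjoint U) v) : ℝ)
          = inner ℝ ((ContinuousLinearMap.adjoint U) v) w := real_inner_comm _ _
        _ = inner ℝ v (U w) := ContinuousLinearMap.adjoint_inner_left U w v
        _ = inner ℝ (U w) v := real_inner_comm _ _
        _ = 0 := this
    -- U is measurable w.r.t. the innerSigma σ-algebras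
    have hU : @Measurable _ _ (innerSigma (timeSubspace T μ t))
        (innerSigma (timeSubspace T μ t)) U := by
      rw [measurable_iff_comap_le]
      unfold innerSigma
      simp_rw [MeasurableSpace.comap_iSup, MeasurableSpace.comap_comp]
      refine iSup₂_le fun v hv => ?_
      have heq : ((fun x : Lp ℝ 2 μ => (inner ℝ v x : ℝ)) ∘ U)
          = fun x => (inner ℝ ((ContinuousLinearMap.adjoint U) v) x : ℝ) := by
        funext x
        simp [ContinuousLinearMap.adjoint_inner_left]
      rw [heq]
      refine Measurable.comap_le ?_
      exact inner_measurable_closure W (hadj v hv)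
        (fun g hg => inner_measurable_innerSigma (V := timeSubspace T μ t) hg)
    have : (K.comp U) ⁻¹' S = U ⁻¹' (K ⁻¹' S) := rfl
    rw [this]
    exact hU (hK t ht S hS)
  · rw [ContinuousLinearMap.adjoint_comp, ← ContinuousLinearMap.comp_assoc,
      ContinuousLinearMap.comp_assoc K U, hUU, ContinuousLinearMap.comp_id]
end

section
/- Let H and H' be real Hilbert spaces and let K₁, K₂ : H → H' be bounded linear operators that are both injective and satisfy K₁ ∘ K₁* = K₂ ∘ K₂*, where Kᵢ* denotes the Hilbert-space adjoint. Then there exists a surjective linear isometry D : H → H (an orthogonal operator) such that K₁ = K₂ ∘ D. -/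
open scoped RealInnerProductSpace

theorem stmt_3 {H H' : Type*}
    [NormedAddCommGroup H] [InnerProductSpace ℝ H] [CompleteSpace H]
    [NormedAddCommGroup H'] [InnerProductSpace ℝ H'] [CompleteSpace H']
    (K₁ K₂ : H →L[ℝ] H')
    (h₁ : Function.Injective K₁) (h₂ : Function.Injective K₂)
    (h : K₁.comp (ContinuousLinearMap.adjoint K₁) =
         K₂.comp (ContinuousLinearMap.adjoint K₂)) :
    ∃ D : H ≃ₗᵢ[ℝ] H, ∀ x : H, K₁ x = K₂ (D x) := by
  classical
  set A : H' →L[ℝ] H := ContinuousLinearMap.adjoint K₁ with hA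
  set B : H' →L[ℝ] H := ContinuousLinearMap.adjoint K₂ with hB
  -- key inner product identity
  have key : ∀ y z : H', ⟪A y, A z⟫ = ⟪B y, B z⟫ := by
    intro y z
    calc ⟪A y, A z⟫ = ⟪y, K₁ (A z)⟫ := by
          rw [hA, ContinuousLinearMap.adjoint_inner_left]
      _ = ⟪y, (K₁.comp A) z⟫ := rfl
      _ = ⟪y, (K₂.comp B) z⟫ := by rw [h]
      _ = ⟪y, K₂ (B z)⟫ := rfl
      _ = ⟪B y, B z⟫ := by rw [hB, ContinuousLinearMap.adjoint_inner_left]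
  have normAB : ∀ y : H', ‖A y‖ = ‖B y‖ := by
    intro y
    have h1 : ‖A y‖ ^ 2 = ‖B y‖ ^ 2 := by
      rw [← real_inner_self_eq_norm_sq, ← real_inner_self_eq_norm_sq, key]
    have h2 := congrArg Real.sqrt h1
    rwa [Real.sqrt_sq (norm_nonneg _), Real.sqrt_sq (norm_nonneg _)] at h2
  -- densities of ranges of adjoints
  have denseAdj : ∀ (K : H →L[ℝ] H'), Function.Injective K →
      Dense ((LinearMap.range (ContinuousLinearMap.adjoint K : H' →ₗ[ℝ] H) : Submodule ℝ H) : Set H) := by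
    intro K hK
    have htop : (LinearMap.range (ContinuousLinearMap.adjoint K : H' →ₗ[ℝ] H)
        : Submodule ℝ H).topologicalClosure = ⊤ := by
      rw [Submodule.topologicalClosure_eq_top_iff, Submodule.eq_bot_iff]
      intro x hx
      have hKx : K x = 0 := by
        have h0 : ⟪K x, K x⟫ = 0 := by
          have := (Submodule.mem_orthogonal _ x).mp hx
            (ContinuousLinearMap.adjoint K (K x)) ⟨K x, rfl⟩
          rwa [ContinuousLinearMap.adjoint_inner_left] at this
        exact inner_self_eq_zero.mp h0
      exact hK (by simp [hKx])
    have hcl : closure ((LinearMap.range (ContinuousLinearMap.adjoint K : H' →ₗ[ℝ] H)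
        : Submodule ℝ H) : Set H) = Set.univ := by
      have := congrArg (fun s : Submodule ℝ H => (s : Set H)) htop
      simpa [Submodule.topologicalClosure_coe] using this
    rw [dense_iff_closure_eq]
    exact hcl
  have denseA : Dense ((LinearMap.range (A : H' →ₗ[ℝ] H) : Submodule ℝ H) : Set H) := denseAdj K₁ h₁
  have denseB : Dense ((LinearMap.range (B : H' →ₗ[ℝ] H) : Submodule ℝ H) : Set H) := denseAdj K₂ h₂
  -- the range of A as a submodule (via the underlying linear map)
  set R : Submodule ℝ H := LinearMap.range (A : H' →ₗ[ℝ] H) with hR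
  have hker : LinearMap.ker (A : H' →ₗ[ℝ] H) ≤ LinearMap.ker (B : H' →ₗ[ℝ] H) := by
    intro y hy
    simp only [LinearMap.mem_ker, ContinuousLinearMap.coe_coe] at hy ⊢
    have hnyz := normAB y
    rw [hy, norm_zero] at hnyz
    exact norm_eq_zero.mp hnyz.symm
  -- the factored linear map from R to H sending A y to B y
  set f₁ : ↥R →ₗ[ℝ] H :=
    ((LinearMap.ker (A : H' →ₗ[ℝ] H)).liftQ (B : H' →ₗ[ℝ] H) hker) ∘ₗ
      (LinearMap.quotKerEquivRange (A : H' →ₗ[ℝ] H)).symm.toLinearMap with hf₁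
  have f₁_eq : ∀ (y : H') (hy : (A : H' →ₗ[ℝ] H) y ∈ R),
      f₁ ⟨(A : H' →ₗ[ℝ] H) y, hy⟩ = B y := by
    intro y hy
    rw [hf₁]
    simp only [LinearMap.coe_comp, LinearEquiv.coe_coe, Function.comp_apply]
    rw [LinearMap.quotKerEquivRange_symm_apply_image (A : H' →ₗ[ℝ] H) y hy]
    rfl
  have f₁_norm : ∀ u : ↥R, ‖f₁ u‖ = ‖u‖ := by
    rintro ⟨u, hu⟩
    obtain ⟨y, rfl⟩ := hu
    rw [f₁_eq y ⟨y, rfl⟩]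
    exact (normAB y).symm
  set fᵢ : ↥R →ₗᵢ[ℝ] H := ⟨f₁, f₁_norm⟩ with hfᵢ
  set e : ↥R →L[ℝ] H := R.subtypeL with he
  have hdense : DenseRange e := by
    have hre : Set.range e = (R : Set H) := Subtype.range_coe
    rw [DenseRange, hre]
    have : R = (LinearMap.range (A : H' →ₗ[ℝ] H) : Submodule ℝ H) := by
      ext x; simp [hR, LinearMap.mem_range]
    rw [this]
    exact denseA
  have h_e : IsUniformInducing e := isometry_subtype_coe.isUniformInducing
  set D₀ : H →L[ℝ] H := fᵢ.toContinuousLinearMap.extend e with hD₀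
  have D₀_eq : ∀ u : ↥R, D₀ (e u) = f₁ u := fun u =>
    ContinuousLinearMap.extend_eq (f := fᵢ.toContinuousLinearMap) (e := e) hdense h_e u
  have D₀_norm : ∀ x : H, ‖D₀ x‖ = ‖x‖ := by
    refine isClosed_property hdense
      (isClosed_eq (continuous_norm.comp D₀.continuous) continuous_norm) ?_
    intro u
    rw [D₀_eq u]
    exact f₁_norm u
  set Dᵢ : H →ₗᵢ[ℝ] H := ⟨(D₀ : H →ₗ[ℝ] H), D₀_norm⟩ with hDᵢ
  have hDB : ∀ z : H', D₀ (A z) = B z := by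
    intro z
    have hz : (A : H' →ₗ[ℝ] H) z ∈ R := ⟨z, rfl⟩
    have hh1 : D₀ (e ⟨(A : H' →ₗ[ℝ] H) z, hz⟩) = f₁ ⟨(A : H' →ₗ[ℝ] H) z, hz⟩ :=
      D₀_eq _
    exact hh1.trans (f₁_eq z hz)
  have hsurj : Function.Surjective Dᵢ := by
    have hclosed : IsClosed (Set.range Dᵢ) :=
      Dᵢ.isometry.isClosedEmbedding.isClosed_range
    have hsub : ((LinearMap.range (B : H' →ₗ[ℝ] H) : Submodule ℝ H) : Set H) ⊆ Set.range Dᵢ := by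
      rintro x ⟨z, rfl⟩
      exact ⟨A z, hDB z⟩
    have huniv : (Set.univ : Set H) ⊆ Set.range Dᵢ := by
      rw [← hclosed.closure_eq]
      calc (Set.univ : Set H)
          = closure ((LinearMap.range (B : H' →ₗ[ℝ] H) : Submodule ℝ H) : Set H) :=
            (denseB.closure_eq).symm
        _ ⊆ closure (Set.range Dᵢ) := closure_mono hsub
    intro x
    exact huniv (Set.mem_univ x)
  set D := LinearIsometryEquiv.ofSurjective Dᵢ hsurj with hD
  have hcoe : ⇑D = ⇑Dᵢ := LinearIsometryEquiv.coe_ofSurjective Dᵢ hsurj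
  refine ⟨D, fun x => ?_⟩
  apply ext_inner_right ℝ
  intro z
  have hDz : D (A z) = B z := by rw [hcoe]; exact hDB z
  calc ⟪K₁ x, z⟫ = ⟪x, A z⟫ := (ContinuousLinearMap.adjoint_inner_right K₁ x z).symm
    _ = ⟪D x, D (A z)⟫ := (D.inner_map_map x (A z)).symm
    _ = ⟪D x, B z⟫ := by rw [hDz]
    _ = ⟪K₂ (D x), z⟫ := ContinuousLinearMap.adjoint_inner_right K₂ _ z
end

section
/- Let m, n be positive integers, A an m×m real positive-semidefinite matrix, B an n×n real positive-semidefinite matrix, and C an m×n real matrix. Then for every m×n real matrix Γ such that the (m+n)×(m+n) block matrix with blocks A, Γ (top row) and Γᵀ, B (bottom row) is positive semidefinite, one has trace(C Γᵀ) ≤ ‖A^{1/2} C B^{1/2}‖_tr, where A^{1/2} and B^{1/2} are the positive-semidefinite square roots of A and B. -/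
open Matrix Polynomial

/-- The positive-semidefinite square root of a positive-semidefinite matrix, as defined in the
older Mathlib (`Matrix.PosSemidef.sqrt`, since removed). -/
noncomputable def Matrix.PosSemidef.sqrt {n 𝕜 : Type*} [Fintype n] [DecidableEq n] [RCLike 𝕜]
    [PartialOrder 𝕜] {A : Matrix n n 𝕜} (hA : A.PosSemidef) : Matrix n n 𝕜 :=
  (hA.1.eigenvectorUnitary : Matrix n n 𝕜) * diagonal ((↑) ∘ Real.sqrt ∘ hA.1.eigenvalues) *
    (star hA.1.eigenvectorUnitary : Matrix n n 𝕜)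

lemma Matrix.PosSemidef.posSemidef_sqrt {ι : Type*} [Fintype ι] [DecidableEq ι]
    {A : Matrix ι ι ℝ} (hA : A.PosSemidef) : hA.sqrt.PosSemidef := by
  unfold Matrix.PosSemidef.sqrt
  rw [Matrix.star_eq_conjTranspose]
  exact (posSemidef_diagonal_iff.mpr fun i => by simp [Real.sqrt_nonneg]).mul_mul_conjTranspose_same _

lemma Matrix.PosSemidef.sqrt_mul_self {ι : Type*} [Fintype ι] [DecidableEq ι]
    {A : Matrix ι ι ℝ} (hA : A.PosSemidef) : hA.sqrt * hA.sqrt = A := by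
  unfold Matrix.PosSemidef.sqrt
  have h1 : star (hA.1.eigenvectorUnitary : Matrix ι ι ℝ) * (hA.1.eigenvectorUnitary : Matrix ι ι ℝ) = 1 :=
    Unitary.coe_star_mul_self _
  simp only [mul_assoc]
  rw [← mul_assoc (star (hA.1.eigenvectorUnitary : Matrix ι ι ℝ)), h1, one_mul]
  conv_rhs => rw [hA.1.spectral_theorem]
  simp only [Unitary.conjStarAlgAut_apply]
  rw [← mul_assoc (diagonal _), diagonal_mul_diagonal, mul_assoc]
  congr 3
  ext i
  simp [Real.mul_self_sqrt (hA.eigenvalues_nonneg i)]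

section Aux

variable {ι κ : Type*} [Fintype ι] [DecidableEq ι] [Fintype κ] [DecidableEq κ]

private lemma trace_sqrt_eq_sum' {M : Matrix ι ι ℝ} (hM : M.PosSemidef) :
    hM.sqrt.trace = ∑ i, Real.sqrt (hM.1.eigenvalues i) := by
  rw [Matrix.PosSemidef.sqrt, Matrix.trace_mul_comm, ← mul_assoc,
    Unitary.coe_star_mul_self, one_mul, Matrix.trace_diagonal]
  simp

private lemma conj_pow' (U D : Matrix ι ι ℝ) (h1 : star U * U = 1) (h2 : U * star U = 1)
    (k : ℕ) : (U * D * star U) ^ k = U * D ^ k * star U := by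
  induction k with
  | zero => simp [h2]
  | succ k ih =>
      rw [pow_succ, ih, pow_succ]
      have h : U * D ^ k * star U * (U * D * star U)
          = U * (D ^ k * ((star U * U) * (D * star U))) := by simp only [mul_assoc]
      rw [h, h1, one_mul]
      simp only [mul_assoc]

private lemma trace_pow_eq_sum' {M : Matrix ι ι ℝ} (hM : M.IsHermitian) (k : ℕ) :
    (M ^ k).trace = ∑ i, hM.eigenvalues i ^ k := by
  conv_lhs => rw [hM.spectral_theorem, Unitary.conjStarAlgAut_apply, conj_pow' _ _ (Unitary.coe_star_mul_self _)
    (Unitary.coe_mul_star_self _), Matrix.trace_mul_comm, ← mul_assoc,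
    Unitary.coe_star_mul_self, one_mul]
  rw [Matrix.diagonal_pow, Matrix.trace_diagonal]
  simp

private lemma pow_conj_mul' (R : Matrix ι κ ℝ) (k : ℕ) :
    (Rᴴ * R) ^ (k + 1) = Rᴴ * (R * Rᴴ) ^ k * R := by
  induction k with
  | zero => simp [pow_succ]
  | succ k ih =>
      rw [pow_succ, ih, pow_succ]
      simp only [Matrix.mul_assoc]

private lemma trace_pow_flip' (R : Matrix ι κ ℝ) (k : ℕ) :
    ((Rᴴ * R) ^ (k + 1)).trace = ((R * Rᴴ) ^ (k + 1)).trace := by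
  rw [pow_conj_mul', Matrix.trace_mul_comm, pow_succ']
  simp only [Matrix.mul_assoc]

private lemma exists_sqrt_poly' (t : Finset ℝ) :
    ∃ p : ℝ[X], p.eval 0 = 0 ∧ ∀ x ∈ t, p.eval x = Real.sqrt x := by
  refine ⟨Lagrange.interpolate (insert 0 t) id Real.sqrt, ?_, fun x hx => ?_⟩
  · have := Lagrange.eval_interpolate_at_node (s := insert (0:ℝ) t) (r := Real.sqrt)
      (Set.injOn_id _) (Finset.mem_insert_self 0 t)
    simpa using this
  · have := Lagrange.eval_interpolate_at_node (s := insert (0:ℝ) t) (r := Real.sqrt)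
      (Set.injOn_id _) (Finset.mem_insert_of_mem hx)
    simpa using this

private lemma sum_eval_eq' (p : ℝ[X]) (f : ι → ℝ) :
    ∑ i, p.eval (f i) =
      ∑ k ∈ Finset.range (p.natDegree + 1), p.coeff k * ∑ i, f i ^ k := by
  simp_rw [Finset.mul_sum]
  rw [Finset.sum_comm]
  refine Finset.sum_congr rfl fun i _ => ?_
  rw [eval_eq_sum_range]

/-- The trace of the psd square root of `RᴴR` equals that of `RRᴴ`. -/
private lemma gtn_flip' (R : Matrix ι κ ℝ) :
    (posSemidef_conjTranspose_mul_self R).sqrt.trace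
      = (posSemidef_self_mul_conjTranspose R).sqrt.trace := by
  set hP := posSemidef_conjTranspose_mul_self R with hPdef
  set hQ := posSemidef_self_mul_conjTranspose R with hQdef
  obtain ⟨p, hp0, hp⟩ := exists_sqrt_poly'
    ((Finset.univ.image hP.1.eigenvalues) ∪ (Finset.univ.image hQ.1.eigenvalues))
  rw [trace_sqrt_eq_sum', trace_sqrt_eq_sum']
  have hl : ∀ i, Real.sqrt (hP.1.eigenvalues i) = p.eval (hP.1.eigenvalues i) := fun i =>
    (hp _ (Finset.mem_union_left _ (Finset.mem_image_of_mem _ (Finset.mem_univ i)))).symm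
  have hr : ∀ i, Real.sqrt (hQ.1.eigenvalues i) = p.eval (hQ.1.eigenvalues i) := fun i =>
    (hp _ (Finset.mem_union_right _ (Finset.mem_image_of_mem _ (Finset.mem_univ i)))).symm
  calc ∑ i, Real.sqrt (hP.1.eigenvalues i)
      = ∑ i, p.eval (hP.1.eigenvalues i) := Finset.sum_congr rfl fun i _ => hl i
    _ = ∑ k ∈ Finset.range (p.natDegree + 1), p.coeff k * ∑ i, hP.1.eigenvalues i ^ k :=
        sum_eval_eq' p _
    _ = ∑ k ∈ Finset.range (p.natDegree + 1), p.coeff k * ∑ i, hQ.1.eigenvalues i ^ k := by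
        refine Finset.sum_congr rfl fun k _ => ?_
        match k with
        | 0 => rw [coeff_zero_eq_eval_zero, hp0, zero_mul, zero_mul]
        | (k + 1) =>
            congr 1
            rw [← trace_pow_eq_sum' hP.1, ← trace_pow_eq_sum' hQ.1]
            exact trace_pow_flip' R k
    _ = ∑ i, p.eval (hQ.1.eigenvalues i) := (sum_eval_eq' p _).symm
    _ = ∑ i, Real.sqrt (hQ.1.eigenvalues i) := Finset.sum_congr rfl fun i _ => (hr i).symm

/-- The trace of a square matrix is at most the trace of the psd square root of `ZᴴZ`. -/
private lemma trace_le_gtn' (Z : Matrix ι ι ℝ) :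
    Z.trace ≤ (posSemidef_conjTranspose_mul_self Z).sqrt.trace := by
  set hP := posSemidef_conjTranspose_mul_self Z with hPdef
  set hH := hP.1
  set U : Matrix ι ι ℝ := (hH.eigenvectorUnitary : Matrix ι ι ℝ)
  have hUU : star U * U = 1 := Unitary.coe_star_mul_self _
  have hUU' : U * star U = 1 := Unitary.coe_mul_star_self _
  have htr : Z.trace = (star U * Z * U).trace := by
    rw [Matrix.trace_mul_comm, ← Matrix.mul_assoc, hUU', Matrix.one_mul]
  rw [htr, trace_sqrt_eq_sum', Matrix.trace]
  refine Finset.sum_le_sum fun j _ => ?_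
  set v : ι → ℝ := ⇑(hH.eigenvectorBasis j) with hv
  have hdiag : (star U * Z * U).diag j = v ⬝ᵥ (Z *ᵥ v) := by
    simp only [Matrix.diag, Matrix.mul_apply, dotProduct, Matrix.mulVec,
      Matrix.star_apply, star_trivial, Finset.sum_mul, Finset.mul_sum]
    rw [Finset.sum_comm]
    refine Finset.sum_congr rfl fun a _ => Finset.sum_congr rfl fun b _ => ?_
    simp only [U, IsHermitian.eigenvectorUnitary_apply, hv]
    ring
  have hnormv : v ⬝ᵥ v = 1 := by
    have := congrFun (congrFun hUU j) j
    simp only [Matrix.mul_apply, Matrix.one_apply_eq, Matrix.star_apply, star_trivial] at this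
    simpa [dotProduct, U, IsHermitian.eigenvectorUnitary_apply, hv] using this
  have heig : (Zᴴ * Z) *ᵥ v = hH.eigenvalues j • v := hH.mulVec_eigenvectorBasis j
  have hZv : (Z *ᵥ v) ⬝ᵥ (Z *ᵥ v) = hH.eigenvalues j := by
    have hvZ : Z *ᵥ v = v ᵥ* Zᴴ := by
      ext a
      simp [Matrix.mulVec, Matrix.vecMul, dotProduct, Matrix.conjTranspose_apply,
        mul_comm]
    have h1 : (Z *ᵥ v) ⬝ᵥ (Z *ᵥ v) = v ⬝ᵥ ((Zᴴ * Z) *ᵥ v) := by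
      rw [← Matrix.mulVec_mulVec]
      conv_rhs => rw [Matrix.dotProduct_mulVec]
      rw [← hvZ]
    rw [h1, heig, dotProduct_smul, smul_eq_mul, hnormv, mul_one]
  rw [hdiag]
  have CS : (v ⬝ᵥ (Z *ᵥ v)) ^ 2 ≤ (v ⬝ᵥ v) * ((Z *ᵥ v) ⬝ᵥ (Z *ᵥ v)) := by
    simpa [dotProduct, pow_two] using
      Finset.sum_mul_sq_le_sq_mul_sq Finset.univ v (Z *ᵥ v)
  rw [hnormv, hZv, one_mul] at CS
  calc v ⬝ᵥ (Z *ᵥ v) ≤ |v ⬝ᵥ (Z *ᵥ v)| := le_abs_self _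
    _ = Real.sqrt ((v ⬝ᵥ (Z *ᵥ v)) ^ 2) := (Real.sqrt_sq_eq_abs _).symm
    _ ≤ Real.sqrt (hH.eigenvalues j) := Real.sqrt_le_sqrt CS

private lemma sqrt_trace_congr' {P Q : Matrix ι ι ℝ} (hP : P.PosSemidef) (hQ : Q.PosSemidef)
    (h : P = Q) : hP.sqrt.trace = hQ.sqrt.trace := by subst h; rfl

end Aux

/-- The trace norm of a real rectangular matrix: the trace of the positive-semidefinite
square root of `Mᵀ M` (equivalently, the sum of the singular values of `M`). -/
noncomputable def traceNorm {m n : ℕ} (M : Matrix (Fin m) (Fin n) ℝ) : ℝ :=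
  (Matrix.posSemidef_conjTranspose_mul_self M).sqrt.trace

theorem stmt_5 {m n : ℕ} (hm : 0 < m) (hn : 0 < n)
    (A : Matrix (Fin m) (Fin m) ℝ) (B : Matrix (Fin n) (Fin n) ℝ)
    (C : Matrix (Fin m) (Fin n) ℝ)
    (hA : A.PosSemidef) (hB : B.PosSemidef)
    (Γ : Matrix (Fin m) (Fin n) ℝ)
    (hblock : (Matrix.fromBlocks A Γ Γᵀ B).PosSemidef) :
    (C * Γᵀ).trace ≤ traceNorm (hA.sqrt * C * hB.sqrt) := by
  classical
  set L : Matrix (Fin m ⊕ Fin n) (Fin m ⊕ Fin n) ℝ := hblock.sqrt with hLdef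
  have hL : L.PosSemidef := hblock.posSemidef_sqrt
  have hLh : Lᴴ = L := hL.1
  have hLL : L * L = Matrix.fromBlocks A Γ Γᵀ B := hblock.sqrt_mul_self
  have hent : ∀ a b, L a b = L b a := fun a b => by
    conv_lhs => rw [← hLh]
    simp [Matrix.conjTranspose_apply]
  set X : Matrix (Fin m ⊕ Fin n) (Fin m) ℝ := L.submatrix id Sum.inl with hXdef
  set Y : Matrix (Fin m ⊕ Fin n) (Fin n) ℝ := L.submatrix id Sum.inr with hYdef
  have key : ∀ (a : Fin m ⊕ Fin n) (b : Fin m ⊕ Fin n),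
      (∑ c, L c a * L c b) = (Matrix.fromBlocks A Γ Γᵀ B) a b := by
    intro a b
    have h2 := congrFun (congrFun hLL a) b
    rw [Matrix.mul_apply] at h2
    rw [← h2]
    exact Finset.sum_congr rfl fun c _ => by rw [hent c a]
  have hXX : Xᴴ * X = A := by
    ext i j
    have := key (Sum.inl i) (Sum.inl j)
    simpa [Matrix.mul_apply, Matrix.conjTranspose_apply, X] using this
  have hYY : Yᴴ * Y = B := by
    ext i j
    have := key (Sum.inr i) (Sum.inr j)
    simpa [Matrix.mul_apply, Matrix.conjTranspose_apply, Y] using this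
  have hXY : Xᴴ * Y = Γ := by
    ext i j
    have := key (Sum.inl i) (Sum.inr j)
    simpa [Matrix.mul_apply, Matrix.conjTranspose_apply, X, Y] using this
  have hΓT : Γᵀ = Yᴴ * X := by
    rw [← Matrix.conjTranspose_eq_transpose_of_trivial, ← hXY, Matrix.conjTranspose_mul,
      Matrix.conjTranspose_conjTranspose]
  set Z : Matrix (Fin m ⊕ Fin n) (Fin m ⊕ Fin n) ℝ := X * C * Yᴴ with hZdef
  have htrZ : (C * Γᵀ).trace = Z.trace := by
    rw [hΓT, ← Matrix.mul_assoc, Matrix.trace_mul_comm, ← Matrix.mul_assoc]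
  -- the psd matrix Q = Cᴴ A C and its square root W
  have hQ : (Cᴴ * A * C).PosSemidef := hA.conjTranspose_mul_mul_same C
  set W : Matrix (Fin n) (Fin n) ℝ := hQ.sqrt with hWdef
  have hWpsd : W.PosSemidef := hQ.posSemidef_sqrt
  have hWh : Wᴴ = W := hWpsd.1
  have hWW : W * W = Cᴴ * A * C := hQ.sqrt_mul_self
  set S : Matrix (Fin m) (Fin m) ℝ := hA.sqrt with hSdef
  set T : Matrix (Fin n) (Fin n) ℝ := hB.sqrt with hTdef
  have hSh : Sᴴ = S := hA.posSemidef_sqrt.1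
  have hTh : Tᴴ = T := hB.posSemidef_sqrt.1
  have hSS : S * S = A := hA.sqrt_mul_self
  have hTT : T * T = B := hB.sqrt_mul_self
  -- chain of equalities between sqrt traces
  have eq1 : Zᴴ * Z = (Y * W) * (Y * W)ᴴ := by
    have h1 : Zᴴ * Z = Y * (Cᴴ * ((Xᴴ * X) * (C * Yᴴ))) := by
      simp only [hZdef, Matrix.conjTranspose_mul, Matrix.conjTranspose_conjTranspose,
        Matrix.mul_assoc]
    have h2 : (Y * W) * (Y * W)ᴴ = Y * (W * (W * Yᴴ)) := by
      simp only [Matrix.conjTranspose_mul, hWh, Matrix.mul_assoc]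
    rw [h1, hXX, h2, ← Matrix.mul_assoc W W, hWW]
    simp only [Matrix.mul_assoc]
  have eq2 : (Y * W)ᴴ * (Y * W) = (T * W)ᴴ * (T * W) := by
    have h1 : (Y * W)ᴴ * (Y * W) = W * ((Yᴴ * Y) * W) := by
      simp only [Matrix.conjTranspose_mul, hWh, Matrix.mul_assoc]
    have h2 : (T * W)ᴴ * (T * W) = W * ((T * T) * W) := by
      simp only [Matrix.conjTranspose_mul, hWh, hTh, Matrix.mul_assoc]
    rw [h1, h2, hYY, hTT]
  have eq3 : (T * W) * (T * W)ᴴ = (S * C * T)ᴴ * (S * C * T) := by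
    have h1 : (T * W) * (T * W)ᴴ = T * ((W * W) * T) := by
      simp only [Matrix.conjTranspose_mul, hWh, hTh, Matrix.mul_assoc]
    have h2 : (S * C * T)ᴴ * (S * C * T) = T * (Cᴴ * ((S * S) * (C * T))) := by
      simp only [Matrix.conjTranspose_mul, hSh, hTh, Matrix.mul_assoc]
    rw [h1, h2, hWW, hSS]
    simp only [Matrix.mul_assoc]
  calc (C * Γᵀ).trace = Z.trace := htrZ
    _ ≤ (posSemidef_conjTranspose_mul_self Z).sqrt.trace := trace_le_gtn' Z
    _ = (posSemidef_self_mul_conjTranspose (Y * W)).sqrt.trace :=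
        sqrt_trace_congr' _ _ eq1
    _ = (posSemidef_conjTranspose_mul_self (Y * W)).sqrt.trace := (gtn_flip' (Y * W)).symm
    _ = (posSemidef_conjTranspose_mul_self (T * W)).sqrt.trace :=
        sqrt_trace_congr' _ _ eq2
    _ = (posSemidef_self_mul_conjTranspose (T * W)).sqrt.trace := gtn_flip' (T * W)
    _ = (posSemidef_conjTranspose_mul_self (S * C * T)).sqrt.trace :=
        sqrt_trace_congr' _ _ eq3
    _ = traceNorm (hA.sqrt * C * hB.sqrt) := rfl
end

section
/- Let r ≤ T be real numbers, let a : [r,T] → ℝ be continuous, and let η : [r,T] → ℝ be continuous, non-decreasing, and satisfy η(r) = 0. If γ : [r,T] → ℝ is continuous and satisfies γ(t) = η(t) + ∫_r^t a(s) γ(s) ds for all t ∈ [r,T], then γ(t) ≥ 0 for all t ∈ [r,T]. -/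
/-!
If `γ(t₁) < 0`, let `t₀` be the last zero of `γ` before `t₁`, so that `γ ≤ 0` on `[t₀, t₁]`.
There, because `η` is non-decreasing, `-γ(t) ≤ ∫_{t₀}^t a (-γ) ≤ M ∫_{t₀}^t (-γ)` with `M` an
upper bound of `a`, and Grönwall's inequality with zero initial value forces `γ = 0` on `[t₀, t₁]`.
-/

open MeasureTheory intervalIntegral Set

theorem exists_last_zero_of_nonneg_of_neg {f : ℝ → ℝ} {a b : ℝ} (hab : a ≤ b)
    (hf : ContinuousOn f (Icc a b)) (ha : 0 ≤ f a) (hb : f b < 0) :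
    ∃ c ∈ Icc a b, f c = 0 ∧ ∀ t ∈ Icc c b, f t ≤ 0 := by
  have hzero : ∀ u ∈ Icc a b, 0 ≤ f u → ∃ c ∈ Icc u b, f c = 0 := fun u hu hfu =>
    intermediate_value_Icc' hu.2 (hf.mono (Icc_subset_Icc_left hu.1)) ⟨hb.le, hfu⟩
  obtain ⟨c₀, hc₀, hfc₀⟩ := hzero a (left_mem_Icc.2 hab) ha
  have hcompact : IsCompact (Icc a b ∩ f ⁻¹' {0}) :=
    isCompact_Icc.of_isClosed_subset
      (hf.preimage_isClosed_of_isClosed isClosed_Icc isClosed_singleton) inter_subset_left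
  obtain ⟨c, ⟨hc, hfc⟩, hmax⟩ := hcompact.exists_isGreatest ⟨c₀, hc₀, hfc₀⟩
  refine ⟨c, hc, hfc, fun t ht => ?_⟩
  by_contra! hft
  obtain ⟨d, hd, hfd⟩ := hzero t ⟨hc.1.trans ht.1, ht.2⟩ hft.le
  have hdc : d ≤ c := hmax ⟨⟨hc.1.trans (ht.1.trans hd.1), hd.2⟩, hfd⟩
  have htd : t = d := le_antisymm hd.1 (hdc.trans ht.1)
  exact hft.ne' (htd ▸ hfd)

theorem eqOn_zero_of_le_mul_integral {φ : ℝ → ℝ} {t₀ t₁ M : ℝ}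
    (hφ : ContinuousOn φ (Icc t₀ t₁)) (hφ0 : ∀ t ∈ Icc t₀ t₁, 0 ≤ φ t)
    (hle : ∀ t ∈ Icc t₀ t₁, φ t ≤ M * ∫ s in t₀..t, φ s) :
    EqOn φ 0 (Icc t₀ t₁) := by
  set F : ℝ → ℝ := fun t => ∫ s in t₀..t, φ s
  have hF : ∀ t ∈ Icc t₀ t₁, HasDerivWithinAt F (φ t) (Icc t₀ t₁) t := fun t ht => by
    have := Fact.mk ht
    exact integral_hasDerivWithinAt_right
      ((hφ.mono (Icc_subset_Icc_right ht.2)).intervalIntegrable_of_Icc ht.1)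
      (hφ.stronglyMeasurableAtFilter_nhdsWithin measurableSet_Icc t) (hφ t ht)
  have hF0 : ∀ t ∈ Icc t₀ t₁, 0 ≤ F t := fun t ht =>
    integral_nonneg ht.1 fun s hs => hφ0 s ⟨hs.1, hs.2.trans ht.2⟩
  have hFzero : EqOn F 0 (Icc t₀ t₁) :=
    eq_zero_of_abs_deriv_le_mul_abs_self_of_eq_zero_right (K := M)
      (fun t ht => (hF t ht).continuousWithinAt)
      (fun t ht => (hF t (Ico_subset_Icc_self ht)).mono_of_mem_nhdsWithin
        (Icc_mem_nhdsGE_of_mem ht))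
      integral_same
      (fun t ht => by
        have ht' := Ico_subset_Icc_self ht
        rw [Real.norm_of_nonneg (hφ0 t ht'), Real.norm_of_nonneg (hF0 t ht')]
        exact hle t ht')
  intro t ht
  refine le_antisymm ?_ (hφ0 t ht)
  simpa [F, hFzero ht] using hle t ht

theorem sub_eq_sub_add_integral_of_eq_add_integral {γ η g : ℝ → ℝ} {r T u v : ℝ}
    (hg : IntegrableOn g (Icc r T)) (heq : ∀ t ∈ Icc r T, γ t = η t + ∫ s in r..t, g s)
    (hu : u ∈ Icc r T) (hv : v ∈ Icc r T) :
    γ v - γ u = η v - η u + ∫ s in u..v, g s := by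
  have hr : r ∈ Icc r T := left_mem_Icc.2 (hu.1.trans hu.2)
  rw [heq v hv, heq u hu, ← integral_interval_sub_left
    (hg.mono_set (uIcc_subset_Icc hr hv)).intervalIntegrable
    (hg.mono_set (uIcc_subset_Icc hr hu)).intervalIntegrable]
  ring

theorem integral_mul_le_mul_integral {a φ : ℝ → ℝ} {u v M : ℝ} (huv : u ≤ v)
    (hφ : IntervalIntegrable φ volume u v)
    (haφ : IntervalIntegrable (fun s => a s * φ s) volume u v)
    (ha : ∀ s ∈ Icc u v, a s ≤ M) (hφ0 : ∀ s ∈ Icc u v, 0 ≤ φ s) :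
    ∫ s in u..v, a s * φ s ≤ M * ∫ s in u..v, φ s := by
  rw [← intervalIntegral.integral_const_mul]
  exact integral_mono_on huv haφ (hφ.const_mul M) fun s hs =>
    mul_le_mul_of_nonneg_right (ha s hs) (hφ0 s hs)

theorem stmt_10_general (r T : ℝ) (hrT : r ≤ T) (a η γ : ℝ → ℝ)
    (ha : ContinuousOn a (Set.Icc r T))
    (hηmono : MonotoneOn η (Set.Icc r T))
    (hηr : η r = 0)
    (hγ : ContinuousOn γ (Set.Icc r T))
    (heq : ∀ t ∈ Set.Icc r T, γ t = η t + ∫ s in r..t, a s * γ s) :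
    ∀ t ∈ Set.Icc r T, 0 ≤ γ t := by
  intro t₁ ht₁
  by_contra! hγt₁
  have hγr : γ r = 0 := by simpa [hηr] using heq r ⟨le_rfl, hrT⟩
  have hsub : Icc r t₁ ⊆ Icc r T := Icc_subset_Icc_right ht₁.2
  obtain ⟨t₀, ht₀, hγt₀, hγle⟩ :=
    exists_last_zero_of_nonneg_of_neg ht₁.1 (hγ.mono hsub) hγr.ge hγt₁
  have hsub' : Icc t₀ t₁ ⊆ Icc r T := (Icc_subset_Icc_left ht₀.1).trans hsub
  have ht₀mem : t₀ ∈ Icc r T := hsub' (left_mem_Icc.2 ht₀.2)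
  have hnegγ : ContinuousOn (fun s => -γ s) (Icc t₀ t₁) := (hγ.mono hsub').neg
  obtain ⟨M, hM⟩ := isCompact_Icc.bddAbove_image ha
  have hbound : ∀ t ∈ Icc t₀ t₁, -γ t ≤ M * ∫ s in t₀..t, -γ s := by
    intro t ht
    have ht₀t : Icc t₀ t ⊆ Icc t₀ t₁ := Icc_subset_Icc_right ht.2
    have hincr := sub_eq_sub_add_integral_of_eq_add_integral (g := fun s => a s * γ s)
      (ha.mul hγ).integrableOn_Icc heq ht₀mem (hsub' ht)
    have hηt := hηmono ht₀mem (hsub' ht) ht.1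
    have hint := integral_mul_le_mul_integral (a := a) ht.1
      ((hnegγ.mono ht₀t).intervalIntegrable_of_Icc ht.1)
      (((ha.mono hsub').mul hnegγ).mono ht₀t |>.intervalIntegrable_of_Icc ht.1)
      (fun s hs => hM (mem_image_of_mem a (hsub' (ht₀t hs))))
      (fun s hs => neg_nonneg.2 (hγle s (ht₀t hs)))
    simp only [mul_neg, intervalIntegral.integral_neg] at hint ⊢
    linarith
  have hγt₁zero := eqOn_zero_of_le_mul_integral hnegγ (fun t ht => neg_nonneg.2 (hγle t ht))
    hbound (right_mem_Icc.2 ht₀.2)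
  exact hγt₁.ne (neg_eq_zero.1 hγt₁zero)

theorem stmt_10 (r T : ℝ) (hrT : r ≤ T) (a η γ : ℝ → ℝ)
    (ha : ContinuousOn a (Set.Icc r T))
    (hη : ContinuousOn η (Set.Icc r T))
    (hηmono : MonotoneOn η (Set.Icc r T))
    (hηr : η r = 0)
    (hγ : ContinuousOn γ (Set.Icc r T))
    (heq : ∀ t ∈ Set.Icc r T, γ t = η t + ∫ s in r..t, a s * γ s) :
    ∀ t ∈ Set.Icc r T, 0 ≤ γ t :=
  stmt_10_general r T hrT a η γ ha hηmono hηr hγ heq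
end

section
/- Let r ≤ T be real numbers, L ≥ 0, and let a₁, a₂ : [r,T] → ℝ be measurable with |a₁(s)| ≤ L and |a₂(s)| ≤ L for all s ∈ [r,T]. Let η : [r,T] → ℝ be continuous and let γ₁, γ₂ : [r,T] → ℝ be continuous with γᵢ(t) = η(t) + ∫_r^t aᵢ(s) γᵢ(s) ds for all t ∈ [r,T], i = 1,2. Then sup_{t ∈ [r,T]} |γ₁(t) − γ₂(t)| ≤ (T−r) e^{2L(T−r)} · (sup_{t ∈ [r,T]} |η(t)|) · (sup_{s ∈ [r,T]} |a₁(s) − a₂(s)|). -/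
open MeasureTheory intervalIntegral

lemma gronwall_int {r T : ℝ} (hrT : r ≤ T) {f : ℝ → ℝ} (hf : ContinuousOn f (Set.Icc r T))
    (hf0 : ∀ t ∈ Set.Icc r T, 0 ≤ f t) {C K : ℝ} (hC : 0 ≤ C) (hK : 0 ≤ K)
    (h : ∀ t ∈ Set.Icc r T, f t ≤ C + K * ∫ s in r..t, f s) :
    ∀ t ∈ Set.Icc r T, f t ≤ C * Real.exp (K * (t - r)) := by
  set g : ℝ → ℝ := fun u => ∫ s in r..u, f s with hg
  have hfint : ∀ t ∈ Set.Icc r T, IntervalIntegrable f volume r t := by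
    intro t ht
    exact (hf.mono (by rw [Set.uIcc_of_le ht.1]; exact Set.Icc_subset_Icc le_rfl ht.2)).intervalIntegrable
  have hgcont : ContinuousOn g (Set.Icc r T) := by
    have := intervalIntegral.continuousOn_primitive_interval (a := r) (b := T) (μ := volume) (f := f)
      (by rw [Set.uIcc_of_le hrT]; exact hf.integrableOn_Icc)
    rwa [Set.uIcc_of_le hrT] at this
  have hgderiv : ∀ x ∈ Set.Ico r T, HasDerivWithinAt g (f x) (Set.Ici x) x := by
    intro x hx
    have hmem : Set.Icc r T ∈ nhdsWithin x (Set.Ici x) := by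
      refine mem_nhdsWithin.2 ⟨Set.Iio T, isOpen_Iio, hx.2, ?_⟩
      rintro y ⟨hy1, hy2⟩
      exact ⟨hx.1.trans hy2, le_of_lt hy1⟩
    have hmem' : Set.Icc r T ∈ nhdsWithin x (Set.Ioi x) :=
      nhdsWithin_mono x Set.Ioi_subset_Ici_self hmem
    exact intervalIntegral.integral_hasDerivWithinAt_right (hfint x ⟨hx.1, hx.2.le⟩)
      ⟨Set.Icc r T, hmem', hf.aestronglyMeasurable measurableSet_Icc⟩
      ((hf x ⟨hx.1, hx.2.le⟩).mono_of_mem_nhdsWithin hmem')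
  have hg0 : ∀ x ∈ Set.Icc r T, 0 ≤ g x := by
    intro x hx
    exact intervalIntegral.integral_nonneg hx.1 (fun s hs => hf0 s ⟨hs.1, hs.2.trans hx.2⟩)
  have hgr : ‖g r‖ ≤ (0 : ℝ) := by
    simp [hg, intervalIntegral.integral_same]
  have key := norm_le_gronwallBound_of_norm_deriv_right_le (K := K) (ε := C) (δ := 0) hgcont hgderiv hgr
    (fun x hx => by
      have hx' : x ∈ Set.Icc r T := ⟨hx.1, hx.2.le⟩
      rw [Real.norm_eq_abs, Real.norm_eq_abs, abs_of_nonneg (hf0 x hx'), abs_of_nonneg (hg0 x hx')]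
      linarith [h x hx'])
  intro t ht
  have hgb := key t ht
  rw [Real.norm_eq_abs, abs_of_nonneg (hg0 t ht)] at hgb
  have hbound : C + K * gronwallBound 0 K C (t - r) = C * Real.exp (K * (t - r)) := by
    rcases eq_or_ne K 0 with hK0 | hK0
    · simp [hK0, gronwallBound_K0]
    · rw [gronwallBound_of_K_ne_0 hK0]
      field_simp
      ring
  calc f t ≤ C + K * g t := h t ht
    _ ≤ C + K * gronwallBound 0 K C (t - r) := by nlinarith
    _ = C * Real.exp (K * (t - r)) := hbound

theorem stmt_13 (r T : ℝ) (hrT : r ≤ T) (L : ℝ) (hL : 0 ≤ L)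
    (a₁ a₂ : ℝ → ℝ) (ha₁ : Measurable a₁) (ha₂ : Measurable a₂)
    (ha₁L : ∀ s ∈ Set.Icc r T, |a₁ s| ≤ L) (ha₂L : ∀ s ∈ Set.Icc r T, |a₂ s| ≤ L)
    (η γ₁ γ₂ : ℝ → ℝ) (hη : ContinuousOn η (Set.Icc r T))
    (hγ₁ : ContinuousOn γ₁ (Set.Icc r T)) (hγ₂ : ContinuousOn γ₂ (Set.Icc r T))
    (heq₁ : ∀ t ∈ Set.Icc r T, γ₁ t = η t + ∫ s in r..t, a₁ s * γ₁ s)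
    (heq₂ : ∀ t ∈ Set.Icc r T, γ₂ t = η t + ∫ s in r..t, a₂ s * γ₂ s) :
    ∀ t ∈ Set.Icc r T,
      |γ₁ t - γ₂ t| ≤ (T - r) * Real.exp (2 * L * (T - r)) *
        (sSup ((fun s => |η s|) '' Set.Icc r T)) *
        (sSup ((fun s => |a₁ s - a₂ s|) '' Set.Icc r T)) := by
  have hrmem : r ∈ Set.Icc r T := ⟨le_rfl, hrT⟩
  set Mη := sSup ((fun s => |η s|) '' Set.Icc r T) with hMηdef
  set Ma := sSup ((fun s => |a₁ s - a₂ s|) '' Set.Icc r T) with hMadef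
  have hηbdd : BddAbove ((fun s => |η s|) '' Set.Icc r T) :=
    (isCompact_Icc.image_of_continuousOn hη.abs).bddAbove
  have habdd : BddAbove ((fun s => |a₁ s - a₂ s|) '' Set.Icc r T) := by
    refine ⟨2 * L, ?_⟩
    rintro _ ⟨s, hs, rfl⟩
    calc |a₁ s - a₂ s| ≤ |a₁ s| + |a₂ s| := abs_sub _ _
      _ ≤ 2 * L := by linarith [ha₁L s hs, ha₂L s hs]
  have hMη : ∀ t ∈ Set.Icc r T, |η t| ≤ Mη := fun t ht => le_csSup hηbdd ⟨t, ht, rfl⟩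
  have hMη0 : 0 ≤ Mη := (abs_nonneg _).trans (hMη r hrmem)
  have hMa : ∀ t ∈ Set.Icc r T, |a₁ t - a₂ t| ≤ Ma := fun t ht => le_csSup habdd ⟨t, ht, rfl⟩
  have hMa0 : 0 ≤ Ma := (abs_nonneg _).trans (hMa r hrmem)
  -- integrability of products
  have hint : ∀ (b γ : ℝ → ℝ), Measurable b → (∀ s ∈ Set.Icc r T, |b s| ≤ L) →
      ContinuousOn γ (Set.Icc r T) → ∀ t ∈ Set.Icc r T,
      IntervalIntegrable (fun s => b s * γ s) volume r t := by
    intro b γ hb hbL hγ t ht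
    obtain ⟨B, hB⟩ := isCompact_Icc.exists_bound_of_continuousOn hγ
    rw [intervalIntegrable_iff_integrableOn_Ioc_of_le ht.1]
    have hmeas : AEStronglyMeasurable (fun s => b s * γ s) (volume.restrict (Set.Ioc r t)) :=
      hb.aestronglyMeasurable.mul
        ((hγ.mono (fun s hs => ⟨hs.1.le, hs.2.trans ht.2⟩)).aestronglyMeasurable measurableSet_Ioc)
    refine Integrable.mono' (g := fun _ => L * B)
      (integrableOn_const measure_Ioc_lt_top.ne) hmeas ?_
    filter_upwards [ae_restrict_mem measurableSet_Ioc] with s hs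
    have hs' : s ∈ Set.Icc r T := ⟨hs.1.le, hs.2.trans ht.2⟩
    rw [Real.norm_eq_abs, abs_mul]
    have h0B : 0 ≤ B := (norm_nonneg _).trans (hB s hs')
    have := hB s hs'
    rw [Real.norm_eq_abs] at this
    exact mul_le_mul (hbL s hs') this (abs_nonneg _) hL
  have habsint : ∀ (γ : ℝ → ℝ), ContinuousOn γ (Set.Icc r T) → ∀ t ∈ Set.Icc r T,
      IntervalIntegrable (fun s => |γ s|) volume r t := by
    intro γ hγ t ht
    exact (hγ.abs.mono (by rw [Set.uIcc_of_le ht.1]; exact Set.Icc_subset_Icc le_rfl ht.2)).intervalIntegrable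
  -- Step 1: bound on γ₂
  have step1 : ∀ t ∈ Set.Icc r T, |γ₂ t| ≤ Mη * Real.exp (L * (t - r)) := by
    apply gronwall_int hrT hγ₂.abs (fun t _ => abs_nonneg _) hMη0 hL
    intro t ht
    have h2 : |∫ s in r..t, a₂ s * γ₂ s| ≤ ∫ s in r..t, |a₂ s * γ₂ s| :=
      intervalIntegral.abs_integral_le_integral_abs ht.1
    have h3 : (∫ s in r..t, |a₂ s * γ₂ s|) ≤ ∫ s in r..t, L * |γ₂ s| := by
      apply intervalIntegral.integral_mono_on ht.1 ((hint a₂ γ₂ ha₂ ha₂L hγ₂ t ht).abs)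
        ((habsint γ₂ hγ₂ t ht).const_mul L)
      intro s hs
      have hs' : s ∈ Set.Icc r T := ⟨hs.1, hs.2.trans ht.2⟩
      rw [abs_mul]
      exact mul_le_mul_of_nonneg_right (ha₂L s hs') (abs_nonneg _)
    rw [intervalIntegral.integral_const_mul] at h3
    calc |γ₂ t| = |η t + ∫ s in r..t, a₂ s * γ₂ s| := by rw [← heq₂ t ht]
      _ ≤ |η t| + |∫ s in r..t, a₂ s * γ₂ s| := abs_add_le _ _
      _ ≤ Mη + L * ∫ s in r..t, |γ₂ s| := by linarith [hMη t ht]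
  have hM₂ : ∀ s ∈ Set.Icc r T, |γ₂ s| ≤ Mη * Real.exp (L * (T - r)) := by
    intro s hs
    refine (step1 s hs).trans (mul_le_mul_of_nonneg_left ?_ hMη0)
    exact Real.exp_le_exp.2 (mul_le_mul_of_nonneg_left (by linarith [hs.2]) hL)
  set M₂ := Mη * Real.exp (L * (T - r)) with hM₂def
  have hM₂0 : 0 ≤ M₂ := mul_nonneg hMη0 (Real.exp_pos _).le
  -- Step 2: Gronwall for the difference
  have step2 : ∀ t ∈ Set.Icc r T,
      |γ₁ t - γ₂ t| ≤ (Ma * M₂ * (T - r)) * Real.exp (L * (t - r)) := by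
    apply gronwall_int hrT (hγ₁.sub hγ₂).abs (fun t _ => abs_nonneg _)
      (mul_nonneg (mul_nonneg hMa0 hM₂0) (by linarith)) hL
    intro t ht
    have hI₁ := hint a₁ γ₁ ha₁ ha₁L hγ₁ t ht
    have hI₂ := hint a₂ γ₂ ha₂ ha₂L hγ₂ t ht
    have hδeq : γ₁ t - γ₂ t = ∫ s in r..t, (a₁ s * γ₁ s - a₂ s * γ₂ s) := by
      rw [heq₁ t ht, heq₂ t ht, intervalIntegral.integral_sub hI₁ hI₂]
      ring
    have h2 : |∫ s in r..t, (a₁ s * γ₁ s - a₂ s * γ₂ s)| ≤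
        ∫ s in r..t, |a₁ s * γ₁ s - a₂ s * γ₂ s| :=
      intervalIntegral.abs_integral_le_integral_abs ht.1
    have h3 : (∫ s in r..t, |a₁ s * γ₁ s - a₂ s * γ₂ s|) ≤
        ∫ s in r..t, (Ma * M₂ + L * |γ₁ s - γ₂ s|) := by
      apply intervalIntegral.integral_mono_on ht.1 ((hI₁.sub hI₂).abs)
        ((_root_.intervalIntegrable_const).add ((habsint _ (hγ₁.sub hγ₂) t ht).const_mul L))
      intro s hs
      have hs' : s ∈ Set.Icc r T := ⟨hs.1, hs.2.trans ht.2⟩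
      have hsplit : a₁ s * γ₁ s - a₂ s * γ₂ s
          = a₁ s * (γ₁ s - γ₂ s) + (a₁ s - a₂ s) * γ₂ s := by ring
      rw [hsplit]
      calc |a₁ s * (γ₁ s - γ₂ s) + (a₁ s - a₂ s) * γ₂ s|
          ≤ |a₁ s * (γ₁ s - γ₂ s)| + |(a₁ s - a₂ s) * γ₂ s| := abs_add_le _ _
        _ = |a₁ s| * |γ₁ s - γ₂ s| + |a₁ s - a₂ s| * |γ₂ s| := by rw [abs_mul, abs_mul]
        _ ≤ L * |γ₁ s - γ₂ s| + Ma * M₂ := by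
            have := mul_le_mul (hMa s hs') (hM₂ s hs') (abs_nonneg _) hMa0
            have := mul_le_mul_of_nonneg_right (ha₁L s hs') (abs_nonneg (γ₁ s - γ₂ s))
            linarith
        _ = Ma * M₂ + L * |γ₁ s - γ₂ s| := by ring
    rw [intervalIntegral.integral_add _root_.intervalIntegrable_const
      ((habsint (fun s => γ₁ s - γ₂ s) (hγ₁.sub hγ₂) t ht).const_mul L), intervalIntegral.integral_const,
      intervalIntegral.integral_const_mul, smul_eq_mul] at h3
    simp only [Pi.sub_apply]
    rw [hδeq]
    have htr : t - r ≤ T - r := by linarith [ht.2]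
    nlinarith [mul_le_mul_of_nonneg_left htr (mul_nonneg hMa0 hM₂0)]
  intro t ht
  calc |γ₁ t - γ₂ t| ≤ (Ma * M₂ * (T - r)) * Real.exp (L * (t - r)) := step2 t ht
    _ ≤ (Ma * M₂ * (T - r)) * Real.exp (L * (T - r)) := by
        refine mul_le_mul_of_nonneg_left ?_ (mul_nonneg (mul_nonneg hMa0 hM₂0) (by linarith))
        exact Real.exp_le_exp.2 (mul_le_mul_of_nonneg_left (by linarith [ht.2]) hL)
    _ = (T - r) * Real.exp (2 * L * (T - r)) * Mη * Ma := by
        rw [hM₂def, show 2 * L * (T - r) = L * (T - r) + L * (T - r) by ring, Real.exp_add]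
        ring
end

section
/- Let r ≤ T be real numbers, L, M ≥ 0, let ϱ : [0,∞) → [0,∞) be non-decreasing, and let b : ℝ → ℝ be twice differentiable with |b′(x)| ≤ L, |b″(x)| ≤ M, and |b″(u) − b″(v)| ≤ ϱ(|u − v|) for all x, u, v ∈ ℝ. Let ω, η, η̃, ζ : [r,T] → ℝ be continuous, and let x, y : [r,T] → ℝ be continuous with x(t) = ω(t) + ∫_r^t b(x(s)) ds + ζ(t) and y(t) = ω(t) + η(t) + ∫_r^t b(y(s)) ds + ζ(t) for all t ∈ [r,T]. Let γ, γ̃_x, γ̃_y, ξ : [r,T] → ℝ be the continuous functions satisfying γ(t) = η(t) + ∫_r^t b′(x(s)) γ(s) ds, γ̃_x(t) = η̃(t) + ∫_r^t b′(x(s)) γ̃_x(s) ds, γ̃_y(t) = η̃(t) + ∫_r^t b′(y(s)) γ̃_y(s) ds, and ξ(t) = ∫_r^t b′(x(s)) ξ(s) ds + ∫_r^t b″(x(s)) γ(s) γ̃_x(s) ds for all t ∈ [r,T]. Then there exists a constant C, depending only on L, M and T−r, such that sup_{t ∈ [r,T]} | γ̃_y(t) − γ̃_x(t) − ξ(t)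 | ≤ C · ‖η̃‖_∞ · ‖η‖_∞ · ( ‖η‖_∞ + ϱ(C‖η‖_∞) ), where ‖f‖_∞ = sup_{t ∈ [r,T]} |f(t)|. -/
open MeasureTheory intervalIntegral

/-- The sup norm `‖f‖_∞ = sup_{t ∈ [r,T]} |f t|` on `[r,T]`. -/
noncomputable def supAbs (r T : ℝ) (f : ℝ → ℝ) : ℝ :=
  sSup ((fun t => |f t|) '' Set.Icc r T)

section auxLemmas

lemma abs_sub_le_of_mem_uIcc {u v w : ℝ} (hw : w ∈ Set.uIcc u v) : |w - v| ≤ |u - v| := by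
  rcases le_total u v with h | h <;>
    simp only [Set.uIcc_of_le, Set.uIcc_of_ge, h, Set.mem_Icc] at hw <;>
    rw [abs_le] <;> constructor <;>
    cases' abs_cases (u - v) with h' h' <;> cases' hw with h1 h2 <;> linarith [h'.1, h'.2]

lemma lipBound {g g' : ℝ → ℝ} {C : ℝ} (u v : ℝ)
    (hd : ∀ x, HasDerivAt g (g' x) x)
    (hC : ∀ w ∈ Set.uIcc u v, |g' w| ≤ C) :
    |g u - g v| ≤ C * |u - v| := by
  have := Convex.norm_image_sub_le_of_norm_hasDerivWithin_le
    (f := g) (f' := g') (s := Set.uIcc u v) (C := C)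
    (fun w hw => (hd w).hasDerivWithinAt) (fun w hw => by simpa using hC w hw)
    (convex_uIcc u v) Set.right_mem_uIcc Set.left_mem_uIcc
  simpa [Real.norm_eq_abs] using this

lemma taylorBound {g g' : ℝ → ℝ} {C : ℝ} (u v : ℝ)
    (hd : ∀ x, HasDerivAt g (g' x) x)
    (hC : ∀ w ∈ Set.uIcc u v, |g' w - g' v| ≤ C) :
    |g u - g v - g' v * (u - v)| ≤ C * |u - v| := by
  have hd2 : ∀ w : ℝ, HasDerivAt (fun z => g z - g' v * z) (g' w - g' v) w := by
    intro w
    have h := (hd w).sub ((hasDerivAt_id w).const_mul (g' v))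
    simp only [mul_one] at h
    exact h
  have := lipBound (g := fun z => g z - g' v * z) (g' := fun z => g' z - g' v) u v hd2 hC
  have heq : g u - g' v * u - (g v - g' v * v) = g u - g v - g' v * (u - v) := by ring
  rw [heq] at this
  exact this

lemma abs_le_supAbs {r T : ℝ} {f : ℝ → ℝ} (hf : ContinuousOn f (Set.Icc r T))
    {t : ℝ} (ht : t ∈ Set.Icc r T) : |f t| ≤ supAbs r T f :=
  le_csSup (isCompact_Icc.bddAbove_image hf.abs) ⟨t, ht, rfl⟩

lemma supAbs_nonneg' {r T : ℝ} (hrT : r ≤ T) {f : ℝ → ℝ}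
    (hf : ContinuousOn f (Set.Icc r T)) : 0 ≤ supAbs r T f :=
  (abs_nonneg _).trans (abs_le_supAbs hf ⟨le_refl r, hrT⟩)

lemma gronwall {r T K a : ℝ} (hrT : r ≤ T) (hK : 0 ≤ K) (ha : 0 ≤ a)
    {f : ℝ → ℝ} (hf : ContinuousOn f (Set.Icc r T))
    (h : ∀ t ∈ Set.Icc r T, |f t| ≤ a + K * ∫ s in r..t, |f s|)
    (n : ℕ) (hn : 2 * K * (T - r) ≤ n) :
    ∀ t ∈ Set.Icc r T, |f t| ≤ a * 2 ^ n := by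
  have hpow : (1:ℝ) ≤ 2 ^ n := one_le_pow₀ (by norm_num)
  have hint : ∀ s t : ℝ, r ≤ s → s ≤ t → t ≤ T →
      IntervalIntegrable (fun u => |f u|) volume s t := by
    intro s t h1 h2 h3
    exact (hf.abs.mono (by rw [Set.uIcc_of_le h2]; exact Set.Icc_subset_Icc h1 h3)).intervalIntegrable
  have hmono : ∀ s t : ℝ, r ≤ s → s ≤ t → t ≤ T →
      (∫ u in r..s, |f u|) ≤ ∫ u in r..t, |f u| := by
    intro s t h1 h2 h3
    rw [← integral_add_adjacent_intervals (hint r s le_rfl h1 (h2.trans h3)) (hint s t h1 h2 h3)]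
    have : 0 ≤ ∫ u in s..t, |f u| := integral_nonneg h2 (fun u _ => abs_nonneg _)
    linarith
  have hInonneg : ∀ t ∈ Set.Icc r T, 0 ≤ ∫ u in r..t, |f u| := fun t ht =>
    integral_nonneg ht.1 (fun u _ => abs_nonneg _)
  rcases eq_or_lt_of_le hK with hK0 | hK0
  · intro t ht
    have := h t ht
    rw [← hK0] at this
    calc |f t| ≤ a + 0 * ∫ s in r..t, |f s| := this
    _ = a := by ring
    _ ≤ a * 2 ^ n := le_mul_of_one_le_right ha hpow
  · set h₀ : ℝ := (2 * K)⁻¹ with hh₀def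
    have hh₀ : 0 < h₀ := by positivity
    have claim : ∀ m : ℕ, ∀ t ∈ Set.Icc r T, t ≤ r + m * h₀ →
        K * ∫ s in r..t, |f s| ≤ a * (2 ^ m - 1) := by
      intro m
      induction m with
      | zero =>
        intro t ht htm
        have : t = r := le_antisymm (by simpa using htm) ht.1
        subst this
        simp
      | succ m IH =>
        intro t ht htm
        set m' : ℝ := min t (r + m * h₀) with hm'def
        have hrm' : r ≤ m' := le_min ht.1 (by nlinarith [m.cast_nonneg (α := ℝ)])
        have hm't : m' ≤ t := min_le_left _ _
        have hm'T : m' ≤ T := hm't.trans ht.2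
        have hm'nh : m' ≤ r + m * h₀ := min_le_right _ _
        have htm' : t - m' ≤ h₀ := by
          rcases le_total t (r + m * h₀) with hc | hc
          · have : m' = t := min_eq_left hc
            rw [this]; linarith
          · have : m' = r + m * h₀ := min_eq_right hc
            rw [this]; push_cast at htm ⊢; linarith
        have hIH := IH m' ⟨hrm', hm'T⟩ hm'nh
        set I : ℝ := ∫ s in r..t, |f s| with hIdef
        have hI0 : 0 ≤ I := hInonneg t ht
        have hsplit : I = (∫ s in r..m', |f s|) + ∫ s in m'..t, |f s| :=
          (integral_add_adjacent_intervals (hint r m' le_rfl hrm' hm'T)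
            (hint m' t hrm' hm't ht.2)).symm
        have hpoint : ∀ s ∈ Set.Icc m' t, |f s| ≤ a + K * I := by
          intro s hs
          have hsIcc : s ∈ Set.Icc r T := ⟨hrm'.trans hs.1, hs.2.trans ht.2⟩
          refine (h s hsIcc).trans ?_
          have := hmono s t hsIcc.1 hs.2 ht.2
          nlinarith
        have htail : (∫ s in m'..t, |f s|) ≤ (t - m') * (a + K * I) := by
          have h2 := integral_mono_on (μ := volume) hm't (hint m' t hrm' hm't ht.2)
            (intervalIntegrable_const) hpoint
          rwa [intervalIntegral.integral_const, smul_eq_mul] at h2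
        have htail2 : (∫ s in m'..t, |f s|) ≤ h₀ * (a + K * I) := by
          have hKI : 0 ≤ a + K * I := by positivity
          nlinarith
        have hKh : K * h₀ = 1 / 2 := by
          rw [hh₀def]; field_simp
        have hIneq : K * I ≤ a * (2 ^ m - 1) + (1 / 2) * (a + K * I) := by
          calc K * I = K * (∫ s in r..m', |f s|) + K * ∫ s in m'..t, |f s| := by
                rw [hsplit]; ring
          _ ≤ a * (2 ^ m - 1) + K * (h₀ * (a + K * I)) := by
                have hKI : 0 ≤ a + K * I := by positivity
                have := mul_le_mul_of_nonneg_left htail2 hK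
                linarith
          _ = a * (2 ^ m - 1) + (1 / 2) * (a + K * I) := by rw [← mul_assoc, hKh]
        have h2m : (2:ℝ) ^ (m + 1) = 2 * 2 ^ m := by rw [pow_succ]; ring
        rw [h2m]; linarith
    intro t ht
    have h1 : 2 * K * h₀ = 1 := by rw [hh₀def]; field_simp
    have htn : t ≤ r + n * h₀ := by
      have h2 := mul_le_mul_of_nonneg_right hn (le_of_lt hh₀)
      nlinarith [ht.2]
    have := claim n t ht htn
    have := h t ht
    linarith

lemma key {r T L B a₀ : ℝ} (hrT : r ≤ T) (hL : 0 ≤ L) (hB : 0 ≤ B) (ha₀ : 0 ≤ a₀)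
    (n : ℕ) (hn : 2 * L * (T - r) ≤ n)
    {f c g : ℝ → ℝ}
    (hf : ContinuousOn f (Set.Icc r T))
    (hgi : ∀ t ∈ Set.Icc r T, IntervalIntegrable g volume r t)
    (heq : ∀ t ∈ Set.Icc r T, f t = c t + ∫ s in r..t, g s)
    (hc : ∀ t ∈ Set.Icc r T, |c t| ≤ a₀)
    (hg : ∀ s ∈ Set.Icc r T, |g s| ≤ L * |f s| + B) :
    ∀ t ∈ Set.Icc r T, |f t| ≤ (a₀ + (T - r) * B) * 2 ^ n := by
  have ha : 0 ≤ a₀ + (T - r) * B := by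
    have : 0 ≤ (T - r) * B := mul_nonneg (by linarith) hB
    linarith
  refine gronwall hrT hL ha hf ?_ n hn
  intro t ht
  have hfint : IntervalIntegrable (fun s => |f s|) volume r t :=
    (hf.abs.mono (by rw [Set.uIcc_of_le ht.1]; exact Set.Icc_subset_Icc le_rfl ht.2)).intervalIntegrable
  have hLfB : IntervalIntegrable (fun s => L * |f s| + B) volume r t :=
    (hfint.const_mul L).add intervalIntegrable_const
  have h1 : |f t| ≤ |c t| + |∫ s in r..t, g s| := by
    rw [heq t ht]; exact abs_add_le _ _
  have h2 : |∫ s in r..t, g s| ≤ ∫ s in r..t, |g s| :=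
    intervalIntegral.abs_integral_le_integral_abs ht.1
  have h3 : (∫ s in r..t, |g s|) ≤ ∫ s in r..t, (L * |f s| + B) := by
    refine integral_mono_on ht.1 (hgi t ht).abs hLfB ?_
    intro s hs
    exact hg s ⟨hs.1, hs.2.trans ht.2⟩
  have h4 : (∫ s in r..t, (L * |f s| + B)) = L * (∫ s in r..t, |f s|) + (t - r) * B := by
    rw [integral_add (hfint.const_mul L) intervalIntegrable_const,
      intervalIntegral.integral_const_mul, intervalIntegral.integral_const, smul_eq_mul]
  have h5 : (t - r) * B ≤ (T - r) * B := mul_le_mul_of_nonneg_right (by linarith [ht.2]) hB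
  have := hc t ht
  linarith

lemma bppInt {r T M : ℝ} {b' b'' x : ℝ → ℝ}
    (hd : ∀ u, HasDerivAt b' (b'' u) u) (hM : ∀ u, |b'' u| ≤ M)
    (hx : ContinuousOn x (Set.Icc r T)) {t : ℝ} (ht : t ∈ Set.Icc r T) :
    IntervalIntegrable (fun s => b'' (x s)) volume r t := by
  have hb'' : Measurable b'' := by
    have h : b'' = deriv b' := funext fun u => ((hd u).deriv).symm
    rw [h]; exact measurable_deriv b'
  rw [intervalIntegrable_iff_integrableOn_Icc_of_le ht.1]
  have hxm : AEMeasurable x (volume.restrict (Set.Icc r t)) :=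
    (hx.mono (Set.Icc_subset_Icc le_rfl ht.2)).aemeasurable measurableSet_Icc
  refine Integrable.mono' (g := fun _ => M) ?_
    ((hb''.comp_aemeasurable hxm).aestronglyMeasurable) ?_
  · exact integrableOn_const measure_Icc_lt_top.ne
  · exact Filter.Eventually.of_forall fun s => by simpa using hM (x s)

end auxLemmas

theorem stmt_15 (L M Δ : ℝ) (hL : 0 ≤ L) (hM : 0 ≤ M)
    (ϱ : ℝ → ℝ) (hϱ0 : ∀ u : ℝ, 0 ≤ u → 0 ≤ ϱ u) (hϱmono : MonotoneOn ϱ (Set.Ici 0)) :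
    ∃ C : ℝ, ∀ r T : ℝ, r ≤ T → T - r = Δ →
      ∀ b b' b'' : ℝ → ℝ,
        (∀ x : ℝ, HasDerivAt b (b' x) x) →
        (∀ x : ℝ, HasDerivAt b' (b'' x) x) →
        (∀ x : ℝ, |b' x| ≤ L) → (∀ x : ℝ, |b'' x| ≤ M) →
        (∀ u v : ℝ, |b'' u - b'' v| ≤ ϱ |u - v|) →
      ∀ ω η ηt ζ x y : ℝ → ℝ,
        ContinuousOn ω (Set.Icc r T) → ContinuousOn η (Set.Icc r T) →
        ContinuousOn ηt (Set.Icc r T) → ContinuousOn ζ (Set.Icc r T) →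
        ContinuousOn x (Set.Icc r T) → ContinuousOn y (Set.Icc r T) →
        (∀ t ∈ Set.Icc r T, x t = ω t + (∫ s in r..t, b (x s)) + ζ t) →
        (∀ t ∈ Set.Icc r T, y t = ω t + η t + (∫ s in r..t, b (y s)) + ζ t) →
      ∀ γ γtx γty ξ : ℝ → ℝ,
        ContinuousOn γ (Set.Icc r T) → ContinuousOn γtx (Set.Icc r T) →
        ContinuousOn γty (Set.Icc r T) → ContinuousOn ξ (Set.Icc r T) →
        (∀ t ∈ Set.Icc r T, γ t = η t + ∫ s in r..t, b' (x s) * γ s) →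
        (∀ t ∈ Set.Icc r T, γtx t = ηt t + ∫ s in r..t, b' (x s) * γtx s) →
        (∀ t ∈ Set.Icc r T, γty t = ηt t + ∫ s in r..t, b' (y s) * γty s) →
        (∀ t ∈ Set.Icc r T, ξ t =
          (∫ s in r..t, b' (x s) * ξ s) + ∫ s in r..t, b'' (x s) * γ s * γtx s) →
        ∀ t ∈ Set.Icc r T, |γty t - γtx t - ξ t| ≤
          C * supAbs r T ηt * supAbs r T η *
            (supAbs r T η + ϱ (C * supAbs r T η)) := by
  refine ⟨(2:ℝ) ^ (⌈2 * L * Δ⌉₊) + Δ * ((2:ℝ) ^ (⌈2 * L * Δ⌉₊)) ^ 3 +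
    2 * Δ ^ 2 * M ^ 2 * ((2:ℝ) ^ (⌈2 * L * Δ⌉₊)) ^ 5, ?_⟩
  intro r T hrT hΔ
  subst hΔ
  intro b b' b'' hb hb' hbL hbM hϱ ω η ηt ζ x y hω hη hηt hζ hx hy hxeq hyeq
    γ γtx γty ξ hγc hγtxc hγtyc hξc hγ hγtx hγty hξ
  set n : ℕ := ⌈2 * L * (T - r)⌉₊ with hndef
  set G : ℝ := (2:ℝ) ^ n with hGdef
  set N : ℝ := supAbs r T η with hNdef
  set Nt : ℝ := supAbs r T ηt with hNtdef
  set C : ℝ := G + (T - r) * G ^ 3 + 2 * (T - r) ^ 2 * M ^ 2 * G ^ 5 with hCdef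
  have hΔ0 : (0:ℝ) ≤ T - r := by linarith
  have hn2 : 2 * L * (T - r) ≤ (n : ℝ) := Nat.le_ceil _
  have hG0 : (0:ℝ) < G := by rw [hGdef]; positivity
  have hG1 : (1:ℝ) ≤ G := one_le_pow₀ (by norm_num)
  have hN0 : 0 ≤ N := supAbs_nonneg' hrT hη
  have hNt0 : 0 ≤ Nt := supAbs_nonneg' hrT hηt
  have hN : ∀ s ∈ Set.Icc r T, |η s| ≤ N := fun s hs => abs_le_supAbs hη hs
  have hNt : ∀ s ∈ Set.Icc r T, |ηt s| ≤ Nt := fun s hs => abs_le_supAbs hηt hs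
  have hNG0 : 0 ≤ N * G := mul_nonneg hN0 hG0.le
  have hNtG0 : 0 ≤ Nt * G := mul_nonneg hNt0 hG0.le
  have hcb : Continuous b := continuous_iff_continuousAt.2 fun u => (hb u).continuousAt
  have hcb' : Continuous b' := continuous_iff_continuousAt.2 fun u => (hb' u).continuousAt
  have hsub : ∀ t ∈ Set.Icc r T, Set.uIcc r t ⊆ Set.Icc r T := fun t ht => by
    rw [Set.uIcc_of_le ht.1]; exact Set.Icc_subset_Icc le_rfl ht.2
  have hlipb : ∀ u v : ℝ, |b u - b v| ≤ L * |u - v| := fun u v =>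
    lipBound u v hb (fun w _ => hbL w)
  have hlipb' : ∀ u v : ℝ, |b' u - b' v| ≤ M * |u - v| := fun u v =>
    lipBound u v hb' (fun w _ => hbM w)
  have hcbx : ContinuousOn (fun s => b (x s)) (Set.Icc r T) := hcb.comp_continuousOn hx
  have hcby : ContinuousOn (fun s => b (y s)) (Set.Icc r T) := hcb.comp_continuousOn hy
  have hcb'x : ContinuousOn (fun s => b' (x s)) (Set.Icc r T) := hcb'.comp_continuousOn hx
  have hcb'y : ContinuousOn (fun s => b' (y s)) (Set.Icc r T) := hcb'.comp_continuousOn hy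
  -- integrability helpers
  have iInt : ∀ (f : ℝ → ℝ), ContinuousOn f (Set.Icc r T) →
      ∀ t ∈ Set.Icc r T, IntervalIntegrable f volume r t := fun f hf t ht =>
    (hf.mono (hsub t ht)).intervalIntegrable
  -- the linear equation for y - x
  have hyx : ∀ t ∈ Set.Icc r T, y t - x t = η t + ∫ s in r..t, (b (y s) - b (x s)) := by
    intro t ht
    rw [integral_sub (iInt _ hcby t ht) (iInt _ hcbx t ht)]
    rw [hyeq t ht, hxeq t ht]; ring
  -- Step 1 : |y - x| ≤ N * G
  have B1 : ∀ s ∈ Set.Icc r T, |y s - x s| ≤ N * G := by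
    have h := key (B := 0) hrT hL le_rfl hN0 n hn2 (hy.sub hx)
      (iInt _ (hcby.sub hcbx))
      hyx hN ?_
    · intro s hs
      have := h s hs
      rw [mul_zero, add_zero, ← hGdef] at this
      exact this
    · intro s _
      rw [add_zero]
      exact hlipb (y s) (x s)
  -- Step 2 : |γ| ≤ N * G, |γtx| ≤ Nt * G, |γty| ≤ Nt * G
  have Bγ : ∀ s ∈ Set.Icc r T, |γ s| ≤ N * G := by
    have h := key (B := 0) hrT hL le_rfl hN0 n hn2 hγc
      (iInt _ (hcb'x.mul hγc)) hγ hN ?_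
    · intro s hs
      have := h s hs
      rw [mul_zero, add_zero, ← hGdef] at this
      exact this
    · intro s _
      rw [add_zero, Pi.mul_apply, abs_mul]
      exact mul_le_mul_of_nonneg_right (hbL (x s)) (abs_nonneg _)
  have Bγtx : ∀ s ∈ Set.Icc r T, |γtx s| ≤ Nt * G := by
    have h := key (B := 0) hrT hL le_rfl hNt0 n hn2 hγtxc
      (iInt _ (hcb'x.mul hγtxc)) hγtx hNt ?_
    · intro s hs
      have := h s hs
      rw [mul_zero, add_zero, ← hGdef] at this
      exact this
    · intro s _
      rw [add_zero, Pi.mul_apply, abs_mul]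
      exact mul_le_mul_of_nonneg_right (hbL (x s)) (abs_nonneg _)
  have Bγty : ∀ s ∈ Set.Icc r T, |γty s| ≤ Nt * G := by
    have h := key (B := 0) hrT hL le_rfl hNt0 n hn2 hγtyc
      (iInt _ (hcb'y.mul hγtyc)) hγty hNt ?_
    · intro s hs
      have := h s hs
      rw [mul_zero, add_zero, ← hGdef] at this
      exact this
    · intro s _
      rw [add_zero, Pi.mul_apply, abs_mul]
      exact mul_le_mul_of_nonneg_right (hbL (y s)) (abs_nonneg _)

  -- Step 3 : |γty - γtx| ≤ (T-r) * M * G^3 * (N * Nt)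
  have Bd : ∀ s ∈ Set.Icc r T, |γty s - γtx s| ≤ (T - r) * M * G ^ 3 * (N * Nt) := by
    have hB : 0 ≤ M * (N * G) * (Nt * G) := mul_nonneg (mul_nonneg hM hNG0) hNtG0
    have heqd : ∀ t ∈ Set.Icc r T, γty t - γtx t = (fun _ => (0:ℝ)) t +
        ∫ s in r..t, (b' (y s) * γty s - b' (x s) * γtx s) := by
      intro t ht
      rw [integral_sub (iInt (fun s => b' (y s) * γty s) (hcb'y.mul hγtyc) t ht) (iInt (fun s => b' (x s) * γtx s) (hcb'x.mul hγtxc) t ht),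
        hγty t ht, hγtx t ht]
      ring
    have h := key (B := M * (N * G) * (Nt * G)) hrT hL hB le_rfl n hn2 (hγtyc.sub hγtxc)
      (iInt _ ((hcb'y.mul hγtyc).sub (hcb'x.mul hγtxc))) heqd (fun t _ => by simp) ?_
    · intro s hs
      have h2 := h s hs
      rw [zero_add, ← hGdef] at h2
      calc |γty s - γtx s| ≤ (T - r) * (M * (N * G) * (Nt * G)) * G := h2
      _ = (T - r) * M * G ^ 3 * (N * Nt) := by ring
    · intro s hs
      have hid : b' (y s) * γty s - b' (x s) * γtx s
          = b' (y s) * (γty s - γtx s) + (b' (y s) - b' (x s)) * γtx s := by ring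
      simp only [Pi.mul_apply, Pi.sub_apply]
      rw [hid]
      calc |b' (y s) * (γty s - γtx s) + (b' (y s) - b' (x s)) * γtx s|
          ≤ |b' (y s) * (γty s - γtx s)| + |(b' (y s) - b' (x s)) * γtx s| := abs_add_le _ _
        _ ≤ L * |γty s - γtx s| + M * (N * G) * (Nt * G) := by
            rw [abs_mul, abs_mul]
            refine add_le_add (mul_le_mul_of_nonneg_right (hbL (y s)) (abs_nonneg _)) ?_
            calc |b' (y s) - b' (x s)| * |γtx s| ≤ (M * |y s - x s|) * |γtx s| :=
              mul_le_mul_of_nonneg_right (hlipb' (y s) (x s)) (abs_nonneg _)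
            _ ≤ M * (N * G) * (Nt * G) :=
              mul_le_mul (mul_le_mul_of_nonneg_left (B1 s hs) hM) (Bγtx s hs) (abs_nonneg _)
                (mul_nonneg hM hNG0)
  -- Step 4 : |y - x - γ| ≤ (T-r) * M * G^3 * (N * N)
  have Bp : ∀ s ∈ Set.Icc r T, |y s - x s - γ s| ≤ (T - r) * M * G ^ 3 * (N * N) := by
    have hB : 0 ≤ M * (N * G) * (N * G) := mul_nonneg (mul_nonneg hM hNG0) hNG0
    have heqp : ∀ t ∈ Set.Icc r T, y t - x t - γ t = (fun _ => (0:ℝ)) t +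
        ∫ s in r..t, ((b (y s) - b (x s)) - b' (x s) * γ s) := by
      intro t ht
      rw [integral_sub ((iInt _ hcby t ht).sub (iInt _ hcbx t ht)) (iInt (fun s => b' (x s) * γ s) (hcb'x.mul hγc) t ht),
        hyx t ht, hγ t ht]
      ring
    have h := key (B := M * (N * G) * (N * G)) hrT hL hB le_rfl n hn2 ((hy.sub hx).sub hγc)
      (iInt _ (((hcby.sub hcbx)).sub (hcb'x.mul hγc))) heqp (fun t _ => by simp) ?_
    · intro s hs
      have h2 := h s hs
      rw [zero_add, ← hGdef] at h2
      calc |y s - x s - γ s| ≤ (T - r) * (M * (N * G) * (N * G)) * G := h2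
      _ = (T - r) * M * G ^ 3 * (N * N) := by ring
    · intro s hs
      have hid : (b (y s) - b (x s)) - b' (x s) * γ s
          = b' (x s) * (y s - x s - γ s) + (b (y s) - b (x s) - b' (x s) * (y s - x s)) := by ring
      simp only [Pi.mul_apply, Pi.sub_apply]
      rw [hid]
      have htay : |b (y s) - b (x s) - b' (x s) * (y s - x s)| ≤ M * (N * G) * (N * G) := by
        have h1 : |b (y s) - b (x s) - b' (x s) * (y s - x s)|
            ≤ (M * |y s - x s|) * |y s - x s| := by
          refine taylorBound (y s) (x s) hb ?_
          intro w hw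
          calc |b' w - b' (x s)| ≤ M * |w - x s| := hlipb' w (x s)
          _ ≤ M * |y s - x s| := mul_le_mul_of_nonneg_left (abs_sub_le_of_mem_uIcc hw) hM
        refine h1.trans ?_
        exact mul_le_mul (mul_le_mul_of_nonneg_left (B1 s hs) hM) (B1 s hs) (abs_nonneg _)
          (mul_nonneg hM hNG0)
      calc |b' (x s) * (y s - x s - γ s) + (b (y s) - b (x s) - b' (x s) * (y s - x s))|
          ≤ |b' (x s) * (y s - x s - γ s)| + |b (y s) - b (x s) - b' (x s) * (y s - x s)| :=
            abs_add_le _ _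
        _ ≤ L * |y s - x s - γ s| + M * (N * G) * (N * G) := by
            rw [abs_mul]
            exact add_le_add (mul_le_mul_of_nonneg_right (hbL (x s)) (abs_nonneg _)) htay
  -- Step 5 : the error term
  have hq1 : 0 ≤ (T - r) * M * G ^ 3 * (N * Nt) :=
    mul_nonneg (mul_nonneg (mul_nonneg hΔ0 hM) (pow_nonneg hG0.le 3)) (mul_nonneg hN0 hNt0)
  have hq2 : 0 ≤ (T - r) * M * G ^ 3 * (N * N) :=
    mul_nonneg (mul_nonneg (mul_nonneg hΔ0 hM) (pow_nonneg hG0.le 3)) (mul_nonneg hN0 hN0)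
  have hϱNG0 : 0 ≤ ϱ (N * G) := hϱ0 _ hNG0
  set BE : ℝ := ϱ (N * G) * (N * G) * (Nt * G) +
      M * ((N * G) * ((T - r) * M * G ^ 3 * (N * Nt)) +
        ((T - r) * M * G ^ 3 * (N * N)) * (Nt * G)) with hBEdef
  have hBE0 : 0 ≤ BE := by
    rw [hBEdef]
    have p1 : 0 ≤ ϱ (N * G) * (N * G) * (Nt * G) :=
      mul_nonneg (mul_nonneg hϱNG0 hNG0) hNtG0
    have p2 : 0 ≤ (N * G) * ((T - r) * M * G ^ 3 * (N * Nt)) := mul_nonneg hNG0 hq1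
    have p3 : 0 ≤ ((T - r) * M * G ^ 3 * (N * N)) * (Nt * G) := mul_nonneg hq2 hNtG0
    have p4 : 0 ≤ M * ((N * G) * ((T - r) * M * G ^ 3 * (N * Nt)) +
        ((T - r) * M * G ^ 3 * (N * N)) * (Nt * G)) := mul_nonneg hM (by linarith)
    linarith
  have Be : ∀ s ∈ Set.Icc r T, |γty s - γtx s - ξ s| ≤ (T - r) * BE * G := by
    have heqe : ∀ t ∈ Set.Icc r T, γty t - γtx t - ξ t = (fun _ => (0:ℝ)) t +
        ∫ s in r..t, (b' (y s) * γty s - b' (x s) * γtx s - b' (x s) * ξ s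
          - b'' (x s) * γ s * γtx s) := by
      intro t ht
      have i1 := iInt (fun s => b' (y s) * γty s) (hcb'y.mul hγtyc) t ht
      have i2 := iInt (fun s => b' (x s) * γtx s) (hcb'x.mul hγtxc) t ht
      have i3 := iInt (fun s => b' (x s) * ξ s) (hcb'x.mul hξc) t ht
      have i4 : IntervalIntegrable (fun s => b'' (x s) * γ s * γtx s) volume r t :=
        ((bppInt hb' hbM hx ht).mul_continuousOn (hγc.mono (hsub t ht))).mul_continuousOn
          (hγtxc.mono (hsub t ht))
      rw [integral_sub ((i1.sub i2).sub i3) i4, integral_sub (i1.sub i2) i3, integral_sub i1 i2,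
        hγty t ht, hγtx t ht, hξ t ht]
      ring
    have hgi : ∀ t ∈ Set.Icc r T, IntervalIntegrable
        (fun s => b' (y s) * γty s - b' (x s) * γtx s - b' (x s) * ξ s
          - b'' (x s) * γ s * γtx s) volume r t := by
      intro t ht
      have i4 : IntervalIntegrable (fun s => b'' (x s) * γ s * γtx s) volume r t :=
        ((bppInt hb' hbM hx ht).mul_continuousOn (hγc.mono (hsub t ht))).mul_continuousOn
          (hγtxc.mono (hsub t ht))
      exact (((iInt _ (hcb'y.mul hγtyc) t ht).sub (iInt _ (hcb'x.mul hγtxc) t ht)).sub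
        (iInt _ (hcb'x.mul hξc) t ht)).sub i4
    have h := key (B := BE) hrT hL hBE0 le_rfl n hn2 ((hγtyc.sub hγtxc).sub hξc)
      hgi heqe (fun t _ => by simp) ?_
    · intro s hs
      have h2 := h s hs
      rw [zero_add, ← hGdef] at h2
      exact h2
    · intro s hs
      have hid : b' (y s) * γty s - b' (x s) * γtx s - b' (x s) * ξ s
            - b'' (x s) * γ s * γtx s
          = b' (x s) * (γty s - γtx s - ξ s)
            + ((b' (y s) - b' (x s) - b'' (x s) * (y s - x s)) * γty s
              + b'' (x s) * ((y s - x s) * (γty s - γtx s) + (y s - x s - γ s) * γtx s)) := by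
        ring
      rw [hid]
      have e1 : |b' (y s) - b' (x s) - b'' (x s) * (y s - x s)| ≤ ϱ (N * G) * (N * G) := by
        have h1 : |b' (y s) - b' (x s) - b'' (x s) * (y s - x s)|
            ≤ ϱ |y s - x s| * |y s - x s| := by
          refine taylorBound (y s) (x s) hb' ?_
          intro w hw
          refine (hϱ w (x s)).trans ?_
          exact hϱmono (Set.mem_Ici.2 (abs_nonneg _)) (Set.mem_Ici.2 (abs_nonneg _))
            (abs_sub_le_of_mem_uIcc hw)
        refine h1.trans ?_
        refine mul_le_mul ?_ (B1 s hs) (abs_nonneg _) hϱNG0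
        exact hϱmono (Set.mem_Ici.2 (abs_nonneg _)) (Set.mem_Ici.2 hNG0) (B1 s hs)
      have f1 : |b' (x s) * (γty s - γtx s - ξ s)| ≤ L * |γty s - γtx s - ξ s| := by
        rw [abs_mul]
        exact mul_le_mul_of_nonneg_right (hbL _) (abs_nonneg _)
      have f2 : |(b' (y s) - b' (x s) - b'' (x s) * (y s - x s)) * γty s|
          ≤ ϱ (N * G) * (N * G) * (Nt * G) := by
        rw [abs_mul]
        exact mul_le_mul e1 (Bγty s hs) (abs_nonneg _) (mul_nonneg hϱNG0 hNG0)
      have f3 : |b'' (x s) * ((y s - x s) * (γty s - γtx s) + (y s - x s - γ s) * γtx s)|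
          ≤ M * ((N * G) * ((T - r) * M * G ^ 3 * (N * Nt)) +
            ((T - r) * M * G ^ 3 * (N * N)) * (Nt * G)) := by
        rw [abs_mul]
        refine mul_le_mul (hbM _) ?_ (abs_nonneg _) hM
        refine (abs_add_le _ _).trans ?_
        rw [abs_mul, abs_mul]
        exact add_le_add
          (mul_le_mul (B1 s hs) (Bd s hs) (abs_nonneg _) hNG0)
          (mul_le_mul (Bp s hs) (Bγtx s hs) (abs_nonneg _) hq2)
      calc |b' (x s) * (γty s - γtx s - ξ s)
            + ((b' (y s) - b' (x s) - b'' (x s) * (y s - x s)) * γty s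
              + b'' (x s) * ((y s - x s) * (γty s - γtx s) + (y s - x s - γ s) * γtx s))|
          ≤ |b' (x s) * (γty s - γtx s - ξ s)|
            + (|(b' (y s) - b' (x s) - b'' (x s) * (y s - x s)) * γty s|
              + |b'' (x s) * ((y s - x s) * (γty s - γtx s) + (y s - x s - γ s) * γtx s)|) :=
            (abs_add_le _ _).trans (by gcongr; exact abs_add_le _ _)
        _ ≤ L * |γty s - γtx s - ξ s| + BE := by
            rw [hBEdef]
            have := add_le_add f1 (add_le_add f2 f3)
            linarith
  -- Final comparison of constants
  intro t ht
  have q1 : 0 ≤ (T - r) * G ^ 3 := mul_nonneg hΔ0 (pow_nonneg hG0.le 3)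
  have q2 : 0 ≤ 2 * (T - r) ^ 2 * M ^ 2 * G ^ 5 :=
    mul_nonneg (by positivity) (pow_nonneg hG0.le 5)
  have hC0 : 0 < C := by rw [hCdef]; linarith
  have hGC : G ≤ C := by rw [hCdef]; linarith
  have hCN0 : 0 ≤ C * N := mul_nonneg hC0.le hN0
  have hNGCN : N * G ≤ C * N := by
    calc N * G = G * N := by ring
    _ ≤ C * N := mul_le_mul_of_nonneg_right hGC hN0
  have hmonoρ : ϱ (N * G) ≤ ϱ (C * N) :=
    hϱmono (Set.mem_Ici.2 hNG0) (Set.mem_Ici.2 hCN0) hNGCN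
  have ht1 : (T - r) * G ^ 3 ≤ C := by rw [hCdef]; linarith
  have ht2 : 2 * (T - r) ^ 2 * M ^ 2 * G ^ 5 ≤ C := by rw [hCdef]; linarith
  calc |γty t - γtx t - ξ t| ≤ (T - r) * BE * G := Be t ht
    _ = (T - r) * G ^ 3 * (N * Nt * ϱ (N * G))
        + 2 * (T - r) ^ 2 * M ^ 2 * G ^ 5 * (N ^ 2 * Nt) := by rw [hBEdef]; ring
    _ ≤ C * (N * Nt * ϱ (C * N)) + C * (N ^ 2 * Nt) := by
        refine add_le_add (mul_le_mul ht1 ?_ ?_ hC0.le) (mul_le_mul_of_nonneg_right ht2 ?_)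
        · exact mul_le_mul_of_nonneg_left hmonoρ (mul_nonneg hN0 hNt0)
        · exact mul_nonneg (mul_nonneg hN0 hNt0) hϱNG0
        · exact mul_nonneg (sq_nonneg N) hNt0
    _ = C * Nt * N * (N + ϱ (C * N)) := by ring
end

section
/- Let T > 0, L ≥ 0, n a positive integer, and let b, b_n : ℝ → ℝ satisfy: |b(x) − b(y)| ≤ L|x − y| and |b_n(x) − b_n(y)| ≤ L|x − y| for all x, y ∈ ℝ; b_n(x) = b(x) whenever |x| ≤ n; and |b(x)| ≤ L(1 + |x|) and |b_n(x)| ≤ L(1 + |x|) for all x ∈ ℝ. Let ζ : [0,T] → ℝ be continuous, y₀ ∈ ℝ, and let y, y_n : [0,T] → ℝ be continuous with y(t) = y₀ + ∫_0^t b(y(s)) ds + ζ(t) and y_n(t) = y₀ + ∫_0^t b_n(y_n(s)) ds + ζ(t) for all t ∈ [0,T]. Then there exists a constant C, depending only on L and T, such that sup_{t ∈ [0,T]} |y_n(t) − y(t)|² ≤ C ∫_0^T (1 + |y(s)|)² · 1_{\{|y(s)| ≥ n\}} ds. -/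
open MeasureTheory intervalIntegral

set_option maxHeartbeats 1000000

theorem stmt_16 (T L : ℝ) (hT : 0 < T) (hL : 0 ≤ L) :
    ∃ C : ℝ, ∀ n : ℕ, 0 < n →
      ∀ b bn : ℝ → ℝ,
        (∀ x y : ℝ, |b x - b y| ≤ L * |x - y|) →
        (∀ x y : ℝ, |bn x - bn y| ≤ L * |x - y|) →
        (∀ x : ℝ, |x| ≤ (n : ℝ) → bn x = b x) →
        (∀ x : ℝ, |b x| ≤ L * (1 + |x|)) →
        (∀ x : ℝ, |bn x| ≤ L * (1 + |x|)) →
      ∀ ζ : ℝ → ℝ, ContinuousOn ζ (Set.Icc 0 T) →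
      ∀ y₀ : ℝ, ∀ y yn : ℝ → ℝ,
        ContinuousOn y (Set.Icc 0 T) → ContinuousOn yn (Set.Icc 0 T) →
        (∀ t ∈ Set.Icc (0:ℝ) T, y t = y₀ + (∫ s in (0:ℝ)..t, b (y s)) + ζ t) →
        (∀ t ∈ Set.Icc (0:ℝ) T, yn t = y₀ + (∫ s in (0:ℝ)..t, bn (yn s)) + ζ t) →
        ∀ t ∈ Set.Icc (0:ℝ) T, |yn t - y t| ^ 2 ≤
          C * ∫ s in (0:ℝ)..T,
            Set.indicator {s : ℝ | (n : ℝ) ≤ |y s|} (fun s => (1 + |y s|) ^ 2) s := by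
  classical
  refine ⟨4 * L ^ 2 * Real.exp ((2 * L + 1) * T), ?_⟩
  intro n hn b bn hb hbn hag hgb hgbn ζ hζ y₀ y yn hy hyn heq heqn t ht
  have hT' : (0 : ℝ) ≤ T := hT.le
  -- continuity of b and bn
  have hbc : Continuous b := by
    have : LipschitzWith (Real.toNNReal L) b := by
      apply LipschitzWith.of_dist_le_mul
      intro x z
      rw [Real.dist_eq, Real.dist_eq, Real.coe_toNNReal L hL]
      exact hb x z
    exact this.continuous
  have hbnc : Continuous bn := by
    have : LipschitzWith (Real.toNNReal L) bn := by
      apply LipschitzWith.of_dist_le_mul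
      intro x z
      rw [Real.dist_eq, Real.dist_eq, Real.coe_toNNReal L hL]
      exact hbn x z
    exact this.continuous
  -- clamped versions of y and yn, continuous on all of ℝ
  set Y : ℝ → ℝ := fun s => y ((Set.projIcc 0 T hT' s : Set.Icc (0:ℝ) T) : ℝ) with hYdef
  set YN : ℝ → ℝ := fun s => yn ((Set.projIcc 0 T hT' s : Set.Icc (0:ℝ) T) : ℝ) with hYNdef
  have hprojc : Continuous fun s : ℝ => ((Set.projIcc 0 T hT' s : Set.Icc (0:ℝ) T) : ℝ) :=
    continuous_subtype_val.comp continuous_projIcc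
  have hprojmem : ∀ s : ℝ, ((Set.projIcc 0 T hT' s : Set.Icc (0:ℝ) T) : ℝ) ∈ Set.Icc (0:ℝ) T :=
    fun s => (Set.projIcc 0 T hT' s).2
  have hYc : Continuous Y := hy.comp_continuous hprojc hprojmem
  have hYNc : Continuous YN := hyn.comp_continuous hprojc hprojmem
  have hYeq : ∀ s ∈ Set.Icc (0:ℝ) T, Y s = y s := by
    intro s hs
    simp only [hYdef, Set.projIcc_of_mem hT' hs]
  have hYNeq : ∀ s ∈ Set.Icc (0:ℝ) T, YN s = yn s := by
    intro s hs
    simp only [hYNdef, Set.projIcc_of_mem hT' hs]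
  -- the drift difference
  set g : ℝ → ℝ := fun s => bn (YN s) - b (Y s) with hgdef
  have hgc : Continuous g := (hbnc.comp hYNc).sub (hbc.comp hYc)
  set Z : ℝ → ℝ := fun t => ∫ s in (0:ℝ)..t, g s with hZdef
  have hZd : ∀ t : ℝ, HasDerivAt Z (g t) t := by
    intro t
    exact intervalIntegral.integral_hasDerivAt_right (hgc.intervalIntegrable _ _)
      (hgc.stronglyMeasurableAtFilter _ _) hgc.continuousAt
  have hZc : Continuous Z := by
    rw [continuous_iff_continuousAt]; exact fun x => (hZd x).continuousAt
  -- Z agrees with yn - y on [0,T]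
  have hZeq : ∀ s ∈ Set.Icc (0:ℝ) T, Z s = yn s - y s := by
    intro s hs
    have hsub : Set.uIcc (0:ℝ) s ⊆ Set.Icc (0:ℝ) T := by
      rw [Set.uIcc_of_le hs.1]
      exact Set.Icc_subset_Icc le_rfl hs.2
    have h1 : (∫ u in (0:ℝ)..s, bn (YN u)) = ∫ u in (0:ℝ)..s, bn (yn u) := by
      apply intervalIntegral.integral_congr
      intro u hu
      simp [hYNeq u (hsub hu)]
    have h2 : (∫ u in (0:ℝ)..s, b (Y u)) = ∫ u in (0:ℝ)..s, b (y u) := by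
      apply intervalIntegral.integral_congr
      intro u hu
      simp [hYeq u (hsub hu)]
    have h3 : Z s = (∫ u in (0:ℝ)..s, bn (YN u)) - ∫ u in (0:ℝ)..s, b (Y u) := by
      rw [hZdef]
      exact intervalIntegral.integral_sub ((hbnc.comp hYNc).intervalIntegrable _ _)
        ((hbc.comp hYc).intervalIntegrable _ _)
    rw [h3, h1, h2, heq s hs, heqn s hs]
    ring
  -- the bad set and the indicator bounds
  set S : Set ℝ := {s : ℝ | (n : ℝ) ≤ |Y s|} with hSdef
  have hSm : MeasurableSet S :=
    (isClosed_le continuous_const hYc.abs).measurableSet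
  set hind : ℝ → ℝ := fun s => S.indicator (fun s => 2 * L * (1 + |Y s|)) s with hinddef
  set h2 : ℝ → ℝ := fun s => S.indicator (fun s => (2 * L * (1 + |Y s|)) ^ 2) s with h2def
  have hindnn : ∀ s, 0 ≤ hind s := by
    intro s
    apply Set.indicator_nonneg
    intro s _
    have := abs_nonneg (Y s)
    positivity
  have h2nn : ∀ s, 0 ≤ h2 s := by
    intro s
    apply Set.indicator_nonneg
    intro s _
    positivity
  have hindsq : ∀ s, hind s ^ 2 = h2 s := by
    intro s
    simp only [hinddef, h2def]
    by_cases hs : s ∈ S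
    · rw [Set.indicator_of_mem hs, Set.indicator_of_mem hs]
    · rw [Set.indicator_of_notMem hs, Set.indicator_of_notMem hs]
      simp
  have hint2 : IntervalIntegrable h2 volume 0 T := by
    rw [intervalIntegrable_iff_integrableOn_Ioc_of_le hT']
    exact ((Continuous.integrableOn_Ioc (by continuity))).indicator hSm
  set K : ℝ := ∫ s in (0:ℝ)..T, h2 s with hKdef
  have hKnn : 0 ≤ K := intervalIntegral.integral_nonneg hT' (fun s _ => h2nn s)
  -- pointwise bound on the drift difference
  have hgbound : ∀ s ∈ Set.Icc (0:ℝ) T, |g s| ≤ L * |Z s| + hind s := by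
    intro s hs
    have hZs : YN s - Y s = Z s := by
      rw [hZeq s hs, hYeq s hs, hYNeq s hs]
    by_cases hmem : s ∈ S
    · have h1 : |g s| ≤ |bn (YN s) - bn (Y s)| + |bn (Y s) - b (Y s)| := by
        calc |g s| = |(bn (YN s) - bn (Y s)) + (bn (Y s) - b (Y s))| := by rw [hgdef]; ring_nf
        _ ≤ _ := abs_add_le _ _
      have h2' : |bn (YN s) - bn (Y s)| ≤ L * |Z s| := by
        rw [← hZs]; exact hbn _ _
      have h3 : |bn (Y s) - b (Y s)| ≤ 2 * L * (1 + |Y s|) := by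
        calc |bn (Y s) - b (Y s)| ≤ |bn (Y s)| + |b (Y s)| := abs_sub _ _
        _ ≤ L * (1 + |Y s|) + L * (1 + |Y s|) := add_le_add (hgbn _) (hgb _)
        _ = 2 * L * (1 + |Y s|) := by ring
      have h4 : hind s = 2 * L * (1 + |Y s|) := by
        simp [hinddef, Set.indicator_of_mem hmem]
      rw [h4]
      linarith
    · have hYs : |Y s| ≤ (n : ℝ) := by
        have : ¬ ((n : ℝ) ≤ |Y s|) := hmem
        linarith [not_le.mp this]
      have heqb : bn (Y s) = b (Y s) := hag _ hYs
      have h1 : g s = bn (YN s) - bn (Y s) := by rw [hgdef, heqb]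
      have h4 : hind s = 0 := by simp [hinddef, Set.indicator_of_notMem hmem]
      rw [h4, h1, ← hZs]
      have := hbn (YN s) (Y s)
      linarith
  -- v = Z^2 and its derivative
  set v : ℝ → ℝ := fun t => Z t ^ 2 with hvdef
  set v' : ℝ → ℝ := fun t => 2 * Z t * g t with hv'def
  have hvd : ∀ t : ℝ, HasDerivAt v (v' t) t := by
    intro t
    have := (hZd t).fun_pow 2
    simpa [hv'def] using this
  have hv'c : Continuous v' := by
    apply Continuous.mul
    · exact (continuous_const.mul hZc)
    · exact hgc
  have hvc : Continuous v := (hZc.pow 2)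
  have hvnn : ∀ s, 0 ≤ v s := fun s => sq_nonneg _
  -- pointwise bound on v'
  have hptw : ∀ s ∈ Set.Icc (0:ℝ) T, |v' s| ≤ (2 * L + 1) * v s + h2 s := by
    intro s hs
    have hg' := hgbound s hs
    have h1 : |v' s| = 2 * |Z s| * |g s| := by
      show |2 * Z s * g s| = 2 * |Z s| * |g s|
      rw [abs_mul, abs_mul, abs_two]
    have hvs : v s = Z s ^ 2 := rfl
    rw [h1, ← hindsq s, hvs]
    nlinarith [sq_nonneg (|Z s| - hind s), abs_nonneg (Z s), abs_nonneg (g s),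
      hindnn s, sq_abs (Z s)]
  -- v as integral of v'
  have hvint : ∀ s : ℝ, v s = ∫ u in (0:ℝ)..s, v' u := by
    intro s
    have := intervalIntegral.integral_eq_sub_of_hasDerivAt
      (f := v) (f' := v') (a := (0:ℝ)) (b := s)
      (fun x _ => hvd x) (hv'c.intervalIntegrable _ _)
    have hv0 : v 0 = 0 := by simp [hvdef, hZdef]
    rw [this, hv0, sub_zero]
  -- the comparison function u
  set u : ℝ → ℝ := fun t => (2 * L + 1) * (∫ s in (0:ℝ)..t, v s) + K with hudef
  have hud : ∀ t : ℝ, HasDerivAt u ((2 * L + 1) * v t) t := by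
    intro t
    have h1 : HasDerivAt (fun t => ∫ s in (0:ℝ)..t, v s) (v t) t :=
      intervalIntegral.integral_hasDerivAt_right (hvc.intervalIntegrable _ _)
        (hvc.stronglyMeasurableAtFilter _ _) hvc.continuousAt
    simpa [hudef] using (h1.const_mul (2 * L + 1)).add_const K
  have huc : Continuous u := by
    rw [continuous_iff_continuousAt]; exact fun x => (hud x).continuousAt
  have hunn : ∀ s ∈ Set.Icc (0:ℝ) T, 0 ≤ u s := by
    intro s hs
    have h1 : 0 ≤ ∫ x in (0:ℝ)..s, v x :=
      intervalIntegral.integral_nonneg hs.1 (fun x _ => hvnn x)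
    have h2L : (0:ℝ) ≤ 2 * L + 1 := by linarith
    rw [hudef]
    positivity
  -- v ≤ u on [0,T]
  have hvu : ∀ s ∈ Set.Icc (0:ℝ) T, v s ≤ u s := by
    intro s hs
    have hsub : Set.uIcc (0:ℝ) s ⊆ Set.Icc (0:ℝ) T := by
      rw [Set.uIcc_of_le hs.1]
      exact Set.Icc_subset_Icc le_rfl hs.2
    have hint2s : IntervalIntegrable h2 volume 0 s :=
      hint2.mono_set (by rw [Set.uIcc_of_le hT']; exact hsub)
    have c1 : v s ≤ ∫ u in (0:ℝ)..s, |v' u| := by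
      rw [hvint s]
      calc (∫ u in (0:ℝ)..s, v' u) ≤ |∫ u in (0:ℝ)..s, v' u| := le_abs_self _
      _ ≤ ∫ u in (0:ℝ)..s, |v' u| := by
          rw [← Real.norm_eq_abs]
          refine (intervalIntegral.norm_integral_le_integral_norm hs.1).trans ?_
          simp [Real.norm_eq_abs]
    have c2 : (∫ u in (0:ℝ)..s, |v' u|) ≤ ∫ u in (0:ℝ)..s, ((2 * L + 1) * v u + h2 u) := by
      apply intervalIntegral.integral_mono_on hs.1
      · exact (hv'c.abs).intervalIntegrable _ _
      · exact (((continuous_const.mul hvc)).intervalIntegrable _ _).add hint2s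
      · intro x hx
        exact hptw x (hsub (by rw [Set.uIcc_of_le hs.1]; exact hx))
    have c3 : (∫ u in (0:ℝ)..s, ((2 * L + 1) * v u + h2 u))
        = (2 * L + 1) * (∫ u in (0:ℝ)..s, v u) + ∫ u in (0:ℝ)..s, h2 u := by
      rw [intervalIntegral.integral_add (f := fun u => (2 * L + 1) * v u) (g := h2) ((continuous_const.mul hvc).intervalIntegrable _ _)
        hint2s, intervalIntegral.integral_const_mul]
    have c4 : (∫ u in (0:ℝ)..s, h2 u) ≤ K := by
      rw [hKdef]
      apply intervalIntegral.integral_mono_interval le_rfl hs.1 hs.2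
      · filter_upwards with x using h2nn x
      · exact hint2
    calc v s ≤ ∫ u in (0:ℝ)..s, |v' u| := c1
    _ ≤ _ := c2
    _ = _ := c3
    _ ≤ (2 * L + 1) * (∫ u in (0:ℝ)..s, v u) + K := by linarith
    _ = u s := by rw [hudef]
  -- Grönwall
  have hgron : ∀ x ∈ Set.Icc (0:ℝ) T, ‖u x‖ ≤ K * Real.exp ((2 * L + 1) * x) := by
    intro x hx
    have := norm_le_gronwallBound_of_norm_deriv_right_le (f := u)
      (f' := fun t => (2 * L + 1) * v t) (δ := K) (K := 2 * L + 1) (ε := 0)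
      (a := 0) (b := T) (huc.continuousOn)
      (fun s _ => (hud s).hasDerivWithinAt)
      (by
        have hu0 : u 0 = K := by simp [hudef]
        rw [hu0, Real.norm_eq_abs, abs_of_nonneg hKnn])
      (by
        intro s hs
        have h1 : ‖(2 * L + 1) * v s‖ = (2 * L + 1) * v s := by
          rw [Real.norm_eq_abs, abs_of_nonneg]
          have := hvnn s
          nlinarith
        have h2' : ‖u s‖ = u s := by
          rw [Real.norm_eq_abs, abs_of_nonneg (hunn s (Set.mem_Icc_of_Ico hs))]
        rw [h1, h2', add_zero]
        have := hvu s (Set.mem_Icc_of_Ico hs)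
        nlinarith)
      x hx
    rwa [sub_zero, gronwallBound_ε0] at this
  -- final bound
  have hfin : |yn t - y t| ^ 2 ≤ K * Real.exp ((2 * L + 1) * T) := by
    have h1 : |yn t - y t| ^ 2 = v t := by
      show |yn t - y t| ^ 2 = Z t ^ 2
      rw [hZeq t ht, sq_abs]
    have h2' := hgron t ht
    have h3 : u t ≤ ‖u t‖ := le_abs_self _
    have h4 : K * Real.exp ((2 * L + 1) * t) ≤ K * Real.exp ((2 * L + 1) * T) := by
      apply mul_le_mul_of_nonneg_left _ hKnn
      apply Real.exp_le_exp.mpr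
      nlinarith [ht.1, ht.2]
    have := hvu t ht
    linarith
  -- identify K with the integral in the statement
  have hKid : K = 4 * L ^ 2 * ∫ s in (0:ℝ)..T,
      Set.indicator {s : ℝ | (n : ℝ) ≤ |y s|} (fun s => (1 + |y s|) ^ 2) s := by
    have e1 : ∀ s ∈ Set.uIcc (0:ℝ) T, h2 s =
        4 * L ^ 2 * Set.indicator {s : ℝ | (n : ℝ) ≤ |y s|} (fun s => (1 + |y s|) ^ 2) s := by
      intro s hs
      rw [Set.uIcc_of_le hT'] at hs
      have hYs : Y s = y s := hYeq s hs
      by_cases hmem : s ∈ S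
      · have hmem' : s ∈ {s : ℝ | (n : ℝ) ≤ |y s|} := by
          rw [Set.mem_setOf_eq, ← hYs]; exact hmem
        rw [h2def]
        simp only [Set.indicator_of_mem hmem, Set.indicator_of_mem hmem', hYs]
        ring
      · have hmem' : s ∉ {s : ℝ | (n : ℝ) ≤ |y s|} := by
          rw [Set.mem_setOf_eq, ← hYs]; exact hmem
        rw [h2def]
        simp [Set.indicator_of_notMem hmem, Set.indicator_of_notMem hmem']
    rw [hKdef, intervalIntegral.integral_congr e1, intervalIntegral.integral_const_mul]
  rw [hKid] at hfin
  calc |yn t - y t| ^ 2 ≤ 4 * L ^ 2 * (∫ s in (0:ℝ)..T,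
      Set.indicator {s : ℝ | (n : ℝ) ≤ |y s|} (fun s => (1 + |y s|) ^ 2) s)
      * Real.exp ((2 * L + 1) * T) := by linarith
  _ = _ := by ring
end
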